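/- arXiv:1402.2751 — 4 statements merged into one kernel-verified Lean document; each statement's English description precedes it below -/
import Mathlib

section
/- Let L = ℤu ⊕ ℤv be a Bravais lattice of ℝ² whose associated quadratic form Q_L has discriminant D = 1 (equivalently, area |L| = 1/2). Then for every real s > 1, ζ_L(2s)·Γ(s)·(2π)^{−s} = 1/(s−1) − 1/s + ∫_1^∞ (θ_L(α) − 1)(α^s + α^{1−s}) dα/α, where Γ is the Gamma function. -/
noncomputable section
open Real

abbrev R2 := EuclideanSpace ℝ (Fin 2)

def vec2 (x y : ℝ) : R2 := (WithLp.equiv 2 (Fin 2 → ℝ)).symm ![x, y]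

/-- `L` is the Bravais lattice generated by the basis `(u, v)` of `ℝ²`. -/
def LatticeBasis (L : Set R2) (u v : R2) : Prop :=
  LinearIndependent ℝ ![u, v] ∧
    L = {x : R2 | ∃ m n : ℤ, x = (m : ℝ) • u + (n : ℝ) • v}

/-- `L` is a Bravais lattice of `ℝ²`. -/
def IsBravais (L : Set R2) : Prop := ∃ u v : R2, LatticeBasis L u v

/-- The area `|L| = ‖u‖‖v‖|sin θ|` of a Bravais lattice. -/
def HasArea (L : Set R2) (A : ℝ) : Prop :=
  ∃ u v : R2, LatticeBasis L u v ∧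
    ‖u‖ * ‖v‖ * |Real.sin (InnerProductGeometry.angle u v)| = A

/-- The Lennard-Jones potential. -/
def VLJ (r : ℝ) : ℝ := r ^ (-12 : ℤ) - 2 * r ^ (-6 : ℤ)

/-- The Lennard-Jones energy of a lattice. -/
def ELJ (L : Set R2) : ℝ := ∑' x : {x : R2 // x ∈ L ∧ x ≠ 0}, VLJ ‖(x : R2)‖

/-- The Epstein zeta function of a lattice. -/
def zetaL (L : Set R2) (s : ℝ) : ℝ := ∑' x : {x : R2 // x ∈ L ∧ x ≠ 0}, ‖(x : R2)‖ ^ (-s)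

/-- The theta function of a lattice. -/
def thetaL (L : Set R2) (α : ℝ) : ℝ := ∑' x : L, Real.exp (-2 * π * α * ‖(x : R2)‖ ^ 2)

/-- The triangular lattice of area `A`. -/
def triLattice (A : ℝ) : Set R2 :=
  {x : R2 | ∃ m n : ℤ, x =
      (m : ℝ) • (Real.sqrt (2 * A / Real.sqrt 3) • vec2 1 0) +
      (n : ℝ) • (Real.sqrt (2 * A / Real.sqrt 3) • vec2 (1/2) (Real.sqrt 3 / 2))}

/-- `L` is the image of `M` under a linear isometry of `ℝ²`. -/
def IsRotationOf (L M : Set R2) : Prop := ∃ f : R2 ≃ₗᵢ[ℝ] R2, L = f '' M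

open Real

namespace RTaux

/-- quadratic form lower bound -/
lemma Q_lb {A B C : ℝ} (hA : 0 < A) (hC : 0 < C) (hD : 4*A*C - B^2 = 1) (m n : ℝ) :
    (m^2 + n^2) / (4*(A+C)) ≤ A*m^2 + B*(m*n) + C*n^2 := by
  rw [div_le_iff₀ (by positivity)]
  nlinarith [sq_nonneg (2*A*m + B*n), sq_nonneg (2*C*n + B*m), sq_nonneg m, sq_nonneg n,
    mul_pos hA hC]

lemma one_le_sq_add_sq {p : ℤ × ℤ} (hp : p ≠ 0) :
    (1:ℝ) ≤ (p.1:ℝ)^2 + (p.2:ℝ)^2 := by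
  rcases Prod.mk.injEq .. ▸ (fun h => hp (Prod.ext_iff.mpr h)) with _
  have h : p.1 ≠ 0 ∨ p.2 ≠ 0 := by
    by_contra h
    push_neg at h
    exact hp (Prod.ext h.1 h.2)
  rcases h with h | h
  · have : (1:ℝ) ≤ (p.1:ℝ)^2 := by
      have := Int.one_le_abs (by simpa using h)
      have : (1:ℝ) ≤ |(p.1:ℝ)| := by exact_mod_cast (by simpa using this : (1:ℤ) ≤ |p.1|)
      nlinarith [abs_nonneg (p.1:ℝ), sq_abs (p.1:ℝ)]
    nlinarith [sq_nonneg (p.2:ℝ)]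
  · have : (1:ℝ) ≤ (p.2:ℝ)^2 := by
      have := Int.one_le_abs (by simpa using h)
      have : (1:ℝ) ≤ |(p.2:ℝ)| := by exact_mod_cast (by simpa using this : (1:ℤ) ≤ |p.2|)
      nlinarith [abs_nonneg (p.2:ℝ), sq_abs (p.2:ℝ)]
    nlinarith [sq_nonneg (p.1:ℝ)]

/-- 1D summability of gaussians over ℤ -/
lemma summable_exp_int_sq {c : ℝ} (hc : 0 < c) : Summable fun n : ℤ => rexp (-c * n^2) := by
  have := summable_pow_mul_jacobiTheta₂_term_bound 0 (T := c/π) (div_pos hc pi_pos) 0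
  refine this.congr fun n => ?_
  rw [pow_zero, one_mul]
  congr 1
  field_simp
  ring

/-- 2D summability of gaussians -/
lemma summable_exp_prod {c : ℝ} (hc : 0 < c) :
    Summable fun p : ℤ × ℤ => rexp (-c * ((p.1:ℝ)^2 + (p.2:ℝ)^2)) := by
  have := (summable_exp_int_sq hc).mul_of_nonneg (summable_exp_int_sq hc)
    (fun n => (exp_pos _).le) (fun n => (exp_pos _).le)
  refine this.congr fun p => ?_
  rw [← Real.exp_add]
  congr 1
  ring

end RTaux

namespace RTaux

lemma natAbs_max_sq_le (a b : ℤ) : ((max a.natAbs b.natAbs : ℕ) : ℝ)^2 ≤ (a:ℝ)^2 + (b:ℝ)^2 := by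
  have ha : ((a.natAbs : ℝ)) = |(a:ℝ)| := by rw [Nat.cast_natAbs]; push_cast; rfl
  have hb : ((b.natAbs : ℝ)) = |(b:ℝ)| := by rw [Nat.cast_natAbs]; push_cast; rfl
  rw [Nat.cast_max, ha, hb]
  rcases max_cases |(a:ℝ)| |(b:ℝ)| with ⟨h, _⟩ | ⟨h, _⟩ <;> rw [h] <;>
    nlinarith [sq_abs (a:ℝ), sq_abs (b:ℝ), sq_nonneg (a:ℝ), sq_nonneg (b:ℝ)]

lemma summable_Q_rpow {A B C s : ℝ} (hA : 0 < A) (hC : 0 < C) (hD : 4*A*C - B^2 = 1)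
    (hs : 1 < s) :
    Summable fun p : {p : ℤ × ℤ // p ≠ 0} =>
      (A*(p.1.1:ℝ)^2 + B*((p.1.1:ℝ)*(p.1.2:ℝ)) + C*(p.1.2:ℝ)^2) ^ (-s) := by
  set δ : ℝ := (4*(A+C))⁻¹ with hδdef
  have hδ : 0 < δ := by positivity
  have hbig : Summable fun x : Fin 2 → ℤ => ‖x‖ ^ (-(2*s)) :=
    EisensteinSeries.summable_one_div_norm_rpow (by linarith)
  have hinj : Function.Injective
      (fun p : {p : ℤ × ℤ // p ≠ 0} => (![p.1.1, p.1.2] : Fin 2 → ℤ)) := by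
    intro p q h
    have h0 := congrFun h 0
    have h1 := congrFun h 1
    simp at h0 h1
    exact Subtype.ext (Prod.ext h0 h1)
  have hcomp := hbig.comp_injective hinj
  refine Summable.of_nonneg_of_le (fun p => Real.rpow_nonneg ?_ _) (fun p => ?_)
    (hcomp.mul_left (δ ^ (-s)))
  · nlinarith [Q_lb hA hC hD (p.1.1:ℝ) (p.1.2:ℝ),
      div_nonneg (by positivity : (0:ℝ) ≤ (p.1.1:ℝ)^2 + (p.1.2:ℝ)^2)
        (by positivity : (0:ℝ) ≤ 4*(A+C))]
  · set m : ℝ := (p.1.1:ℝ); set n : ℝ := (p.1.2:ℝ)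
    set x : Fin 2 → ℤ := ![p.1.1, p.1.2] with hxdef
    have hxn : ‖x‖ = ((max (p.1.1).natAbs (p.1.2).natAbs : ℕ) : ℝ) := by
      rw [EisensteinSeries.norm_eq_max_natAbs]
      simp [hxdef]
    have hx : ‖x‖ ^ 2 ≤ m^2 + n^2 := by rw [hxn]; exact natAbs_max_sq_le _ _
    have hxpos : (0:ℝ) < ‖x‖ := by
      rw [norm_pos_iff]
      intro h
      have h0 := congrFun h 0
      have h1 := congrFun h 1
      simp [hxdef] at h0 h1
      exact p.2 (Prod.ext h0 h1)
    have hQge : δ * ‖x‖^2 ≤ A*m^2 + B*(m*n) + C*n^2 := by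
      calc δ * ‖x‖^2 ≤ δ * (m^2+n^2) := mul_le_mul_of_nonneg_left hx hδ.le
        _ = (m^2 + n^2) / (4*(A+C)) := by rw [hδdef]; ring
        _ ≤ _ := Q_lb hA hC hD m n
    calc (A*m^2 + B*(m*n) + C*n^2) ^ (-s)
        ≤ (δ * ‖x‖^2) ^ (-s) :=
          Real.rpow_le_rpow_of_nonpos (by positivity) hQge (by linarith)
      _ = δ ^ (-s) * (‖x‖^2) ^ (-s) := Real.mul_rpow hδ.le (by positivity)
      _ = δ ^ (-s) * ‖x‖ ^ (-(2*s)) := by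
          rw [← Real.rpow_natCast ‖x‖ 2, ← Real.rpow_mul (norm_nonneg _)]
          congr 1
          push_cast
          ring

end RTaux

namespace RTaux
open Complex in
lemma norm_cexp_re (x y : ℝ) : ‖Complex.exp (↑x + ↑y * Complex.I)‖ = Real.exp x := by
  rw [Complex.norm_exp]; simp

lemma norm_cexp_ofReal (x : ℝ) : ‖Complex.exp (↑x : ℂ)‖ = Real.exp x := by
  rw [Complex.norm_exp]; simp

lemma summable_exp_linear {a : ℝ} (ha : 0 < a) (b : ℝ) :
    Summable fun k : ℤ => Real.exp (-a*(k:ℝ)^2 + b*k) := by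
  refine Summable.of_nonneg_of_le (fun _ => (Real.exp_pos _).le) (fun k => ?_)
    ((summable_exp_int_sq (show 0 < a/2 by linarith)).mul_left (Real.exp (b^2/(2*a))))
  rw [← Real.exp_add]
  apply Real.exp_le_exp.mpr
  have h := sq_nonneg (a*(k:ℝ) - b)
  have h2 : 0 < 2*a := by linarith
  rw [div_add' _ _ _ (ne_of_gt h2), le_div_iff₀ h2]
  nlinarith [sq_nonneg (a*(k:ℝ) - b)]

lemma summable_exp_Q {A B C : ℝ} (hA : 0 < A) (hC : 0 < C) (hD : 4*A*C - B^2 = 1)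
    {t : ℝ} (ht : 0 < t) :
    Summable fun p : ℤ × ℤ =>
      Real.exp (-t * (A*(p.1:ℝ)^2 + B*((p.1:ℝ)*(p.2:ℝ)) + C*(p.2:ℝ)^2)) := by
  have hδ : (0:ℝ) < t * (4*(A+C))⁻¹ := by positivity
  refine Summable.of_nonneg_of_le (fun _ => (Real.exp_pos _).le) (fun p => ?_)
    (summable_exp_prod hδ)
  apply Real.exp_le_exp.mpr
  have h := Q_lb hA hC hD (p.1:ℝ) (p.2:ℝ)
  have : ((p.1:ℝ)^2 + (p.2:ℝ)^2) * (4*(A+C))⁻¹ ≤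
      A*(p.1:ℝ)^2 + B*((p.1:ℝ)*(p.2:ℝ)) + C*(p.2:ℝ)^2 := by
    rw [← div_eq_mul_inv]; exact h
  have hb : -t * (A*(p.1:ℝ)^2 + B*((p.1:ℝ)*(p.2:ℝ)) + C*(p.2:ℝ)^2) ≤
      -t * (((p.1:ℝ)^2 + (p.2:ℝ)^2) * (4*(A+C))⁻¹) :=
    neg_le_neg (mul_le_mul_of_nonneg_left this ht.le) |>.trans_eq (by ring) |>.trans_eq' (by ring)
  calc -t * (A*(p.1:ℝ)^2 + B*((p.1:ℝ)*(p.2:ℝ)) + C*(p.2:ℝ)^2)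
      ≤ -t * (((p.1:ℝ)^2 + (p.2:ℝ)^2) * (4*(A+C))⁻¹) := hb
    _ = -(t * (4*(A+C))⁻¹) * ((p.1:ℝ)^2 + (p.2:ℝ)^2) := by ring

end RTaux

namespace RTaux
open Complex

lemma quad_helper (r : ℝ) (x : ℤ) (c z : ℝ) :
    -(π:ℂ)/((r : ℝ):ℂ) * ((x:ℂ) + Complex.I*((c : ℝ):ℂ))^2 + ((z : ℝ):ℂ)
      = ((-π/r*((x:ℝ)^2 - c^2) + z : ℝ):ℂ) + ((-π/r*(2*(x:ℝ)*c) : ℝ):ℂ)*Complex.I := by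
  push_cast
  linear_combination (-((π:ℂ)/(r:ℂ) * (c:ℂ)^2)) * Complex.I_sq

lemma add_mul_I_congr {x y u v : ℝ} (hx : x = u) (hy : y = v) :
    ((x : ℝ):ℂ) + ((y : ℝ):ℂ)*Complex.I = ((u : ℝ):ℂ) + ((v : ℝ):ℂ)*Complex.I := by
  rw [hx, hy]

set_option maxHeartbeats 1000000 in
lemma theta_fe {A B C : ℝ} (hA : 0 < A) (hC : 0 < C) (hD : 4*A*C - B^2 = 1)
    {β : ℝ} (hβ : 0 < β) :
    (∑' p : ℤ × ℤ, Real.exp (-(2*π*β) * (A*(p.1:ℝ)^2 + B*((p.1:ℝ)*(p.2:ℝ)) + C*(p.2:ℝ)^2)))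
      = β⁻¹ * ∑' p : ℤ × ℤ,
          Real.exp (-(2*π*β⁻¹) * (A*(p.1:ℝ)^2 + B*((p.1:ℝ)*(p.2:ℝ)) + C*(p.2:ℝ)^2)) := by
  have hβ' : β ≠ 0 := hβ.ne'
  have hA' : A ≠ 0 := hA.ne'
  have hBC : B^2 = 4*A*C - 1 := by linarith
  have hC2 : C = (B^2+1)/(4*A) := by field_simp; linarith
  have pi_pos := Real.pi_pos
  -- complexify
  rw [← Complex.ofReal_inj, Complex.ofReal_tsum, Complex.ofReal_mul, Complex.ofReal_tsum]
  simp_rw [Complex.ofReal_exp]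
  -- summability of standard gaussian sums
  have hsummC : ∀ {t : ℝ}, 0 < t → Summable (fun p : ℤ × ℤ =>
      cexp ((-(2*π*t) * (A*(p.1:ℝ)^2 + B*((p.1:ℝ)*(p.2:ℝ)) + C*(p.2:ℝ)^2) : ℝ):ℂ)) := by
    intro t ht
    apply Summable.of_norm
    simp_rw [norm_cexp_ofReal]
    exact summable_exp_Q hA hC hD (by positivity)
  have hsummSwap : Summable (fun q : ℤ × ℤ =>
      cexp ((-(2*π*β) * (A*(q.2:ℝ)^2 + B*((q.2:ℝ)*(q.1:ℝ)) + C*(q.1:ℝ)^2) : ℝ):ℂ)) :=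
    (Equiv.prodComm ℤ ℤ).summable_iff.mpr (hsummC hβ)
  -- middle summability
  have hmid : Summable (fun q : ℤ × ℤ =>
      cexp (((-π/(2*β*A)*(q.2:ℝ)^2 - π*β/(2*A)*(q.1:ℝ)^2 : ℝ):ℂ)
        + ((π*B/A*((q.1:ℝ)*(q.2:ℝ)) : ℝ):ℂ)*Complex.I)) := by
    apply Summable.of_norm
    simp_rw [norm_cexp_re]
    have c1 : (0:ℝ) < π/(2*β*A) := by positivity
    have c2 : (0:ℝ) < π*β/(2*A) := by positivity
    have hprod := (summable_exp_int_sq c2).mul_of_nonneg (summable_exp_int_sq c1)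
      (fun _ => (Real.exp_pos _).le) (fun _ => (Real.exp_pos _).le)
    refine hprod.congr fun q => ?_
    rw [← Real.exp_add]
    congr 1
    ring
  have hmidSwap : Summable (fun q : ℤ × ℤ =>
      cexp (((-π/(2*β*A)*(q.1:ℝ)^2 - π*β/(2*A)*(q.2:ℝ)^2 : ℝ):ℂ)
        + ((π*B/A*((q.2:ℝ)*(q.1:ℝ)) : ℝ):ℂ)*Complex.I)) :=
    (Equiv.prodComm ℤ ℤ).summable_iff.mpr hmid
  -- final-form summability (indexed (k,m))
  have hend : Summable (fun q : ℤ × ℤ =>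
      cexp ((-(2*π*β⁻¹) * (A*(q.2:ℝ)^2 - B*((q.2:ℝ)*(q.1:ℝ)) + C*(q.1:ℝ)^2) : ℝ):ℂ)) := by
    apply Summable.of_norm
    simp_rw [norm_cexp_ofReal]
    have h := summable_exp_Q hA hC hD (t := 2*π*β⁻¹) (by positivity)
    have h2 := ((Equiv.prodComm ℤ ℤ).trans
      ((Equiv.refl ℤ).prodCongr (Equiv.neg ℤ))).summable_iff.mpr h
    refine h2.congr fun q => ?_
    obtain ⟨k, m⟩ := q
    simp only [Function.comp_apply, Equiv.trans_apply, Equiv.prodComm_apply, Prod.swap_prod_mk,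
      Equiv.prodCongr_apply, Equiv.coe_refl, Prod.map_apply, id_eq, Equiv.neg_apply]
    congr 1
    push_cast
    ring
  -- the main complex chain
  calc
    ∑' p : ℤ × ℤ, cexp ((-(2*π*β) * (A*(p.1:ℝ)^2 + B*((p.1:ℝ)*(p.2:ℝ)) + C*(p.2:ℝ)^2) : ℝ):ℂ)
      = ∑' q : ℤ × ℤ,
          cexp ((-(2*π*β) * (A*(q.2:ℝ)^2 + B*((q.2:ℝ)*(q.1:ℝ)) + C*(q.1:ℝ)^2) : ℝ):ℂ) :=
        ((Equiv.prodComm ℤ ℤ).tsum_eq (fun p : ℤ × ℤ =>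
          cexp ((-(2*π*β) * (A*(p.1:ℝ)^2 + B*((p.1:ℝ)*(p.2:ℝ)) + C*(p.2:ℝ)^2) : ℝ):ℂ))).symm
    _ = ∑' n : ℤ, ∑' m : ℤ,
          cexp ((-(2*π*β) * (A*(m:ℝ)^2 + B*((m:ℝ)*(n:ℝ)) + C*(n:ℝ)^2) : ℝ):ℂ) :=
        Summable.tsum_prod' hsummSwap (fun n => hsummSwap.prod_factor n)
    _ = ∑' n : ℤ, ((1/((2*β*A : ℝ):ℂ)^(1/2:ℂ) * ∑' k : ℤ,
            cexp (-(π:ℂ)/((2*β*A : ℝ):ℂ) * ((k:ℂ) + Complex.I*((-β*B*(n:ℝ) : ℝ):ℂ))^2))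
          * cexp ((-(2*π*β) * (C*(n:ℝ)^2) : ℝ):ℂ)) := by
        refine tsum_congr fun n => ?_
        have hterm : ∀ m : ℤ,
            cexp ((-(2*π*β) * (A*(m:ℝ)^2 + B*((m:ℝ)*(n:ℝ)) + C*(n:ℝ)^2) : ℝ):ℂ)
            = cexp (-(π:ℂ)*((2*β*A : ℝ):ℂ)*(m:ℂ)^2 + 2*(π:ℂ)*((-β*B*(n:ℝ) : ℝ):ℂ)*(m:ℂ))
              * cexp ((-(2*π*β) * (C*(n:ℝ)^2) : ℝ):ℂ) := by
          intro m
          rw [← Complex.exp_add]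
          congr 1
          push_cast
          ring
        rw [tsum_congr hterm, tsum_mul_right,
          Complex.tsum_exp_neg_quadratic (by rw [Complex.ofReal_re]; positivity)
            ((-β*B*(n:ℝ) : ℝ):ℂ)]
    _ = 1/((2*β*A : ℝ):ℂ)^(1/2:ℂ) * ∑' n : ℤ, ∑' k : ℤ,
          cexp (((-π/(2*β*A)*(k:ℝ)^2 - π*β/(2*A)*(n:ℝ)^2 : ℝ):ℂ)
            + ((π*B/A*((n:ℝ)*(k:ℝ)) : ℝ):ℂ)*Complex.I) := by
        rw [← tsum_mul_left]
        refine tsum_congr fun n => ?_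
        rw [mul_assoc]
        congr 1
        rw [← tsum_mul_right]
        refine tsum_congr fun k => ?_
        rw [← Complex.exp_add, quad_helper (2*β*A) k (-β*B*(n:ℝ)) (-(2*π*β) * (C*(n:ℝ)^2))]
        refine congrArg cexp (add_mul_I_congr ?_ ?_)
        · rw [hC2]; field_simp; ring
        · field_simp
    _ = 1/((2*β*A : ℝ):ℂ)^(1/2:ℂ) * ∑' k : ℤ, ∑' n : ℤ,
          cexp (((-π/(2*β*A)*(k:ℝ)^2 - π*β/(2*A)*(n:ℝ)^2 : ℝ):ℂ)
            + ((π*B/A*((n:ℝ)*(k:ℝ)) : ℝ):ℂ)*Complex.I) := by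
        congr 1
        calc ∑' n : ℤ, ∑' k : ℤ,
              cexp (((-π/(2*β*A)*(k:ℝ)^2 - π*β/(2*A)*(n:ℝ)^2 : ℝ):ℂ)
                + ((π*B/A*((n:ℝ)*(k:ℝ)) : ℝ):ℂ)*Complex.I)
            = ∑' q : ℤ × ℤ,
              cexp (((-π/(2*β*A)*(q.2:ℝ)^2 - π*β/(2*A)*(q.1:ℝ)^2 : ℝ):ℂ)
                + ((π*B/A*((q.1:ℝ)*(q.2:ℝ)) : ℝ):ℂ)*Complex.I) :=
            (Summable.tsum_prod' hmid (fun n => hmid.prod_factor n)).symm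
          _ = ∑' q : ℤ × ℤ,
              cexp (((-π/(2*β*A)*(q.1:ℝ)^2 - π*β/(2*A)*(q.2:ℝ)^2 : ℝ):ℂ)
                + ((π*B/A*((q.2:ℝ)*(q.1:ℝ)) : ℝ):ℂ)*Complex.I) :=
            ((Equiv.prodComm ℤ ℤ).tsum_eq (fun q : ℤ × ℤ =>
              cexp (((-π/(2*β*A)*(q.2:ℝ)^2 - π*β/(2*A)*(q.1:ℝ)^2 : ℝ):ℂ)
                + ((π*B/A*((q.1:ℝ)*(q.2:ℝ)) : ℝ):ℂ)*Complex.I))).symm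
          _ = ∑' k : ℤ, ∑' n : ℤ,
              cexp (((-π/(2*β*A)*(k:ℝ)^2 - π*β/(2*A)*(n:ℝ)^2 : ℝ):ℂ)
                + ((π*B/A*((n:ℝ)*(k:ℝ)) : ℝ):ℂ)*Complex.I) :=
            Summable.tsum_prod' hmidSwap (fun k => hmidSwap.prod_factor k)
    _ = 1/((2*β*A : ℝ):ℂ)^(1/2:ℂ) * ∑' k : ℤ,
          ((1/((β/(2*A) : ℝ):ℂ)^(1/2:ℂ) * ∑' m : ℤ,
              cexp (-(π:ℂ)/((β/(2*A) : ℝ):ℂ)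
                * ((m:ℂ) + Complex.I*(Complex.I*((B*(k:ℝ)/(2*A) : ℝ):ℂ)))^2))
            * cexp ((-π/(2*β*A)*(k:ℝ)^2 : ℝ):ℂ)) := by
        congr 1
        refine tsum_congr fun k => ?_
        have hterm : ∀ n : ℤ,
            cexp (((-π/(2*β*A)*(k:ℝ)^2 - π*β/(2*A)*(n:ℝ)^2 : ℝ):ℂ)
              + ((π*B/A*((n:ℝ)*(k:ℝ)) : ℝ):ℂ)*Complex.I)
            = cexp (-(π:ℂ)*((β/(2*A) : ℝ):ℂ)*(n:ℂ)^2
                + 2*(π:ℂ)*(Complex.I*((B*(k:ℝ)/(2*A) : ℝ):ℂ))*(n:ℂ))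
              * cexp ((-π/(2*β*A)*(k:ℝ)^2 : ℝ):ℂ) := by
          intro n
          rw [← Complex.exp_add]
          congr 1
          push_cast
          have hβC : (β:ℂ) ≠ 0 := Complex.ofReal_ne_zero.mpr hβ'
          field_simp
          ring
        rw [tsum_congr hterm, tsum_mul_right,
          Complex.tsum_exp_neg_quadratic (by rw [Complex.ofReal_re]; positivity)
            (Complex.I*((B*(k:ℝ)/(2*A) : ℝ):ℂ))]
    _ = 1/((2*β*A : ℝ):ℂ)^(1/2:ℂ) * (1/((β/(2*A) : ℝ):ℂ)^(1/2:ℂ) * ∑' k : ℤ, ∑' m : ℤ,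
          cexp ((-(2*π*β⁻¹) * (A*(m:ℝ)^2 - B*((m:ℝ)*(k:ℝ)) + C*(k:ℝ)^2) : ℝ):ℂ)) := by
        congr 1
        rw [← tsum_mul_left]
        refine tsum_congr fun k => ?_
        rw [mul_assoc]
        congr 1
        rw [← tsum_mul_right]
        refine tsum_congr fun m => ?_
        rw [← Complex.exp_add]
        have hIc : Complex.I*(Complex.I*((B*(k:ℝ)/(2*A) : ℝ):ℂ))
            = ((-(B*(k:ℝ)/(2*A)) : ℝ):ℂ) := by
          push_cast
          linear_combination ((B:ℂ)*(k:ℂ)/(2*(A:ℂ))) * Complex.I_sq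
        rw [hIc]
        congr 1
        have hreal : -π/(β/(2*A)) * ((m:ℝ) + (-(B*(k:ℝ)/(2*A))))^2 + (-π/(2*β*A)*(k:ℝ)^2)
            = -(2*π*β⁻¹) * (A*(m:ℝ)^2 - B*((m:ℝ)*(k:ℝ)) + C*(k:ℝ)^2) := by
          rw [hC2]
          field_simp
          ring
        exact_mod_cast hreal
    _ = ((β⁻¹ : ℝ):ℂ) * ∑' p : ℤ × ℤ,
          cexp ((-(2*π*β⁻¹) * (A*(p.1:ℝ)^2 + B*((p.1:ℝ)*(p.2:ℝ)) + C*(p.2:ℝ)^2) : ℝ):ℂ) := by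
        rw [← mul_assoc]
        congr 1
        · -- prefactor
          rw [div_mul_div_comm, one_mul]
          have h1 : ((2*β*A : ℝ):ℂ) ^ (1/2 : ℂ) = (((2*β*A:ℝ) ^ (1/2 : ℝ) : ℝ):ℂ) := by
            rw [Complex.ofReal_cpow (by positivity : (0:ℝ) ≤ 2*β*A)]
            norm_num
          have h2 : ((β/(2*A) : ℝ):ℂ) ^ (1/2 : ℂ) = (((β/(2*A):ℝ) ^ (1/2 : ℝ) : ℝ):ℂ) := by
            rw [Complex.ofReal_cpow (by positivity : (0:ℝ) ≤ β/(2*A))]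
            norm_num
          rw [h1, h2, ← Complex.ofReal_mul,
            ← Real.mul_rpow (by positivity) (by positivity)]
          have h3 : (2*β*A) * (β/(2*A)) = β^2 := by field_simp
          rw [h3, ← Real.rpow_natCast β 2, ← Real.rpow_mul hβ.le]
          norm_num
        · rw [← Summable.tsum_prod' hend (fun k => hend.prod_factor k),
            ← ((Equiv.prodComm ℤ ℤ).trans
              ((Equiv.refl ℤ).prodCongr (Equiv.neg ℤ))).tsum_eq (fun p : ℤ × ℤ =>
              cexp ((-(2*π*β⁻¹) * (A*(p.1:ℝ)^2 + B*((p.1:ℝ)*(p.2:ℝ)) + C*(p.2:ℝ)^2) : ℝ):ℂ))]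
          refine tsum_congr fun q => ?_
          obtain ⟨k, m⟩ := q
          simp only [Equiv.trans_apply, Equiv.prodComm_apply, Prod.swap_prod_mk,
            Equiv.prodCongr_apply, Equiv.coe_refl, Prod.map_apply, id_eq, Equiv.neg_apply]
          congr 1
          push_cast
          ring

end RTaux

open MeasureTheory Set

set_option maxHeartbeats 2000000 in
/-- Riemann's trick: for a Bravais lattice whose quadratic form `Q_L(m,n) = ‖mu+nv‖²`
has discriminant `D = 4‖u‖²‖v‖² − 4⟨u,v⟩² = 1`, and any `s > 1`,
`ζ_L(2s)Γ(s)(2π)^{−s} = 1/(s−1) − 1/s + ∫_1^∞ (θ_L(α)−1)(α^s + α^{1−s}) dα/α`. -/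
theorem riemann_trick (u v : R2) (huv : LinearIndependent ℝ ![u, v])
    (hD : 4 * ‖u‖ ^ 2 * ‖v‖ ^ 2 - 4 * (inner ℝ u v : ℝ) ^ 2 = 1)
    (s : ℝ) (hs : 1 < s) :
    (∑' p : {p : ℤ × ℤ // p ≠ 0}, ‖(p.1.1 : ℝ) • u + (p.1.2 : ℝ) • v‖ ^ (-(2 * s))) *
        Real.Gamma s * (2 * π) ^ (-s) =
      1 / (s - 1) - 1 / s +
        ∫ α in Set.Ioi (1 : ℝ),
          ((∑' p : ℤ × ℤ,
              Real.exp (-2 * π * α * ‖(p.1 : ℝ) • u + (p.2 : ℝ) • v‖ ^ 2)) - 1) *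
            (α ^ s + α ^ (1 - s)) / α := by
  classical
  have pi_pos := Real.pi_pos
  have hu : u ≠ 0 := by have := huv.ne_zero 0; simpa using this
  have hv : v ≠ 0 := by have := huv.ne_zero 1; simpa using this
  set A : ℝ := ‖u‖^2 with hA_def
  set B : ℝ := 2 * (inner ℝ u v : ℝ) with hB_def
  set C : ℝ := ‖v‖^2 with hC_def
  have hA : 0 < A := pow_pos (norm_pos_iff.mpr hu) 2
  have hC : 0 < C := pow_pos (norm_pos_iff.mpr hv) 2
  have hD' : 4*A*C - B^2 = 1 := by rw [hA_def, hB_def, hC_def]; nlinarith [hD]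
  have hQ : ∀ (m n : ℤ), ‖(m:ℝ) • u + (n:ℝ) • v‖^2
      = A*(m:ℝ)^2 + B*((m:ℝ)*(n:ℝ)) + C*(n:ℝ)^2 := by
    intro m n
    rw [norm_add_sq_real, norm_smul, norm_smul, real_inner_smul_left, real_inner_smul_right,
      mul_pow, mul_pow, Real.norm_eq_abs, Real.norm_eq_abs, sq_abs, sq_abs,
      hA_def, hB_def, hC_def]
    ring
  set Qp : ℤ × ℤ → ℝ := fun p => A*(p.1:ℝ)^2 + B*((p.1:ℝ)*(p.2:ℝ)) + C*(p.2:ℝ)^2 with hQp_def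
  set δ : ℝ := (4*(A+C))⁻¹ with hδ_def
  have hδpos : 0 < δ := by rw [hδ_def]; positivity
  have hδQ : ∀ p : {p : ℤ × ℤ // p ≠ 0}, δ ≤ Qp p.1 := by
    intro p
    have h1 : ((p.1.1:ℝ)^2 + (p.1.2:ℝ)^2) / (4*(A+C)) ≤ Qp p.1 :=
      RTaux.Q_lb hA hC hD' (p.1.1:ℝ) (p.1.2:ℝ)
    have h2 := RTaux.one_le_sq_add_sq p.2
    refine le_trans ?_ h1
    rw [hδ_def, inv_eq_one_div]
    gcongr
  have hQpos : ∀ p : {p : ℤ × ℤ // p ≠ 0}, 0 < Qp p.1 := fun p => lt_of_lt_of_le hδpos (hδQ p)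
  have hQsum : Summable fun p : {p : ℤ × ℤ // p ≠ 0} => (Qp p.1) ^ (-s) :=
    RTaux.summable_Q_rpow hA hC hD' hs
  have hgS : ∀ {t : ℝ}, 0 < t →
      Summable (fun p : {p : ℤ × ℤ // p ≠ 0} => rexp (-(2*π*t) * Qp p.1)) := by
    intro t ht
    exact (RTaux.summable_exp_Q hA hC hD' (show 0 < 2*π*t by positivity)).comp_injective
      Subtype.coe_injective
  set g : ℝ → ℝ := fun α => ∑' p : {p : ℤ × ℤ // p ≠ 0}, rexp (-(2*π*α) * Qp p.1) with hg_def
  have hg_nonneg : ∀ α, 0 ≤ g α := fun α => tsum_nonneg (fun p => (Real.exp_pos _).le)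
  have hg_meas : Measurable g := by
    have heq : g = fun α => ((∑' p : {p : ℤ × ℤ // p ≠ 0},
        Real.toNNReal (rexp (-(2*π*α) * Qp p.1)) : NNReal) : ℝ) := by
      funext α
      rw [NNReal.coe_tsum]
      exact tsum_congr fun p => (Real.coe_toNNReal _ (Real.exp_pos _).le).symm
    rw [heq]
    apply Measurable.comp NNReal.continuous_coe.measurable
    apply Measurable.nnreal_tsum
    intro p
    apply Measurable.real_toNNReal
    simp only [hQp_def]
    fun_prop
  have hfull : ∀ {α : ℝ}, 0 < α →
      (∑' p : ℤ × ℤ, rexp (-(2*π*α) * Qp p)) = 1 + g α := by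
    intro α hα
    have hsum : Summable fun p : ℤ × ℤ => rexp (-(2*π*α) * Qp p) :=
      RTaux.summable_exp_Q hA hC hD' (show 0 < 2*π*α by positivity)
    rw [← hsum.tsum_subtype_add_tsum_subtype_compl {0}]
    congr 1
    · rw [tsum_singleton 0 (fun p : ℤ × ℤ => rexp (-(2*π*α) * Qp p))]
      simp [hQp_def]
  have hgFE : ∀ {α : ℝ}, 0 < α → g α = α⁻¹ * g α⁻¹ + α⁻¹ - 1 := by
    intro α hα
    have hFE : (∑' p : ℤ × ℤ, rexp (-(2*π*α) * Qp p))
        = α⁻¹ * ∑' p : ℤ × ℤ, rexp (-(2*π*α⁻¹) * Qp p) := RTaux.theta_fe hA hC hD' hα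
    rw [hfull hα, hfull (inv_pos.mpr hα)] at hFE
    linarith [hFE]
  have hg_le : ∀ α : ℝ, 1 ≤ α → g α ≤ (g 1 * rexp (2*π*δ)) * rexp (-(2*π*δ)*α) := by
    intro α hα1
    have hα : (0:ℝ) < α := lt_of_lt_of_le one_pos hα1
    have hle : ∀ p : {p : ℤ × ℤ // p ≠ 0}, rexp (-(2*π*α) * Qp p.1)
        ≤ rexp (-(2*π*1) * Qp p.1) * (rexp (2*π*δ) * rexp (-(2*π*δ)*α)) := by
      intro p
      rw [← Real.exp_add, ← Real.exp_add]
      apply Real.exp_le_exp.mpr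
      nlinarith [mul_nonneg (mul_nonneg (by positivity : (0:ℝ) ≤ 2*π)
        (sub_nonneg.mpr hα1)) (sub_nonneg.mpr (hδQ p))]
    calc g α ≤ ∑' p : {p : ℤ × ℤ // p ≠ 0},
            rexp (-(2*π*1) * Qp p.1) * (rexp (2*π*δ) * rexp (-(2*π*δ)*α)) :=
          Summable.tsum_le_tsum hle (hgS hα) ((hgS one_pos).mul_right _)
      _ = (g 1 * rexp (2*π*δ)) * rexp (-(2*π*δ)*α) := by
          rw [tsum_mul_right]
          simp only [hg_def]
          ring
  -- per-term Mellin integrals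
  have hFint : ∀ p : {p : ℤ × ℤ // p ≠ 0},
      IntegrableOn (fun α => α^(s-1) * rexp (-(2*π*α) * Qp p.1)) (Ioi 0) := by
    intro p
    have h0 := integrableOn_rpow_mul_exp_neg_mul_rpow (p := 1) (show (-1:ℝ) < s-1 by linarith) one_pos
      (mul_pos (by positivity : (0:ℝ) < 2*π) (hQpos p))
    refine h0.congr_fun (fun x hx => ?_) measurableSet_Ioi
    simp only [Real.rpow_one]
    congr 1
    ring
  have hFval : ∀ p : {p : ℤ × ℤ // p ≠ 0}, (Qp p.1)^(-s) * Real.Gamma s * (2*π)^(-s)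
      = ∫ α in Ioi 0, α^(s-1) * rexp (-(2*π*α) * Qp p.1) := by
    intro p
    have hr : 0 < 2*π*Qp p.1 := mul_pos (by positivity) (hQpos p)
    have hval := integral_rpow_mul_exp_neg_mul_Ioi (show 0 < s by linarith) hr
    have hcong : (∫ α in Ioi 0, α^(s-1) * rexp (-(2*π*α) * Qp p.1))
        = ∫ t in Ioi 0, t^(s-1) * rexp (-(2*π*Qp p.1 * t)) := by
      refine setIntegral_congr_fun measurableSet_Ioi (fun t _ => ?_)
      congr 1
      congr 1
      ring
    rw [hcong, hval, one_div, Real.inv_rpow hr.le, ← Real.rpow_neg hr.le,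
      Real.mul_rpow (by positivity : (0:ℝ) ≤ 2*π) (hQpos p).le]
    ring
  have htot : Summable (fun p : {p : ℤ × ℤ // p ≠ 0} =>
      (Qp p.1)^(-s) * Real.Gamma s * (2*π)^(-s)) := (hQsum.mul_right _).mul_right _
  have hIocInt : ∀ p : {p : ℤ × ℤ // p ≠ 0},
      IntegrableOn (fun α => α^(s-1) * rexp (-(2*π*α) * Qp p.1)) (Ioc 0 1) :=
    fun p => (hFint p).mono_set Set.Ioc_subset_Ioi_self
  have hIoiInt : ∀ p : {p : ℤ × ℤ // p ≠ 0},
      IntegrableOn (fun α => α^(s-1) * rexp (-(2*π*α) * Qp p.1)) (Ioi 1) :=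
    fun p => (hFint p).mono_set (Set.Ioi_subset_Ioi zero_le_one)
  have hsplitInt : ∀ p : {p : ℤ × ℤ // p ≠ 0},
      (∫ α in Ioi 0, α^(s-1) * rexp (-(2*π*α) * Qp p.1))
      = (∫ α in Ioc 0 1, α^(s-1) * rexp (-(2*π*α) * Qp p.1))
        + ∫ α in Ioi 1, α^(s-1) * rexp (-(2*π*α) * Qp p.1) := by
    intro p
    rw [← Set.Ioc_union_Ioi_eq_Ioi (zero_le_one (α := ℝ))]
    exact setIntegral_union (Set.Ioc_disjoint_Ioi le_rfl) measurableSet_Ioi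
      (hIocInt p) (hIoiInt p)
  have hFnn : ∀ (T : Set ℝ), MeasurableSet T → T ⊆ Ioi 0 → ∀ p : {p : ℤ × ℤ // p ≠ 0},
      0 ≤ ∫ α in T, α^(s-1) * rexp (-(2*π*α) * Qp p.1) := by
    intro T hT hsub p
    refine setIntegral_nonneg hT (fun x hx => ?_)
    exact mul_nonneg (Real.rpow_nonneg (le_of_lt (hsub hx)) _) (Real.exp_pos _).le
  have hFle : ∀ (T : Set ℝ), T ⊆ Ioi 0 → ∀ p : {p : ℤ × ℤ // p ≠ 0},
      (∫ α in T, α^(s-1) * rexp (-(2*π*α) * Qp p.1))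
        ≤ ∫ α in Ioi 0, α^(s-1) * rexp (-(2*π*α) * Qp p.1) := by
    intro T hsub p
    refine setIntegral_mono_set (hFint p) ?_ (HasSubset.Subset.eventuallyLE hsub)
    filter_upwards [ae_restrict_mem measurableSet_Ioi] with x hx
    exact mul_nonneg (Real.rpow_nonneg (le_of_lt hx) _) (Real.exp_pos _).le
  have h1sum : Summable (fun p : {p : ℤ × ℤ // p ≠ 0} =>
      ∫ α in Ioc 0 1, α^(s-1) * rexp (-(2*π*α) * Qp p.1)) := by
    refine Summable.of_nonneg_of_le (hFnn _ measurableSet_Ioc Set.Ioc_subset_Ioi_self)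
      (fun p => le_of_le_of_eq (hFle _ Set.Ioc_subset_Ioi_self p) (hFval p).symm) htot
  have h2sum : Summable (fun p : {p : ℤ × ℤ // p ≠ 0} =>
      ∫ α in Ioi 1, α^(s-1) * rexp (-(2*π*α) * Qp p.1)) := by
    refine Summable.of_nonneg_of_le
      (hFnn _ measurableSet_Ioi (Set.Ioi_subset_Ioi zero_le_one))
      (fun p => le_of_le_of_eq (hFle _ (Set.Ioi_subset_Ioi zero_le_one) p) (hFval p).symm) htot
  have hexch : ∀ (T : Set ℝ), MeasurableSet T → T ⊆ Ioi 0 →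
      (∀ p : {p : ℤ × ℤ // p ≠ 0},
        IntegrableOn (fun α => α^(s-1) * rexp (-(2*π*α) * Qp p.1)) T) →
      Summable (fun p : {p : ℤ × ℤ // p ≠ 0} =>
        ∫ α in T, α^(s-1) * rexp (-(2*π*α) * Qp p.1)) →
      (∑' p : {p : ℤ × ℤ // p ≠ 0}, ∫ α in T, α^(s-1) * rexp (-(2*π*α) * Qp p.1))
        = ∫ α in T, α^(s-1) * g α := by
    intro T hT hsub hint hsum2
    have hnorm : ∀ p : {p : ℤ × ℤ // p ≠ 0},
        (∫ α in T, ‖α^(s-1) * rexp (-(2*π*α) * Qp p.1)‖)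
          = ∫ α in T, α^(s-1) * rexp (-(2*π*α) * Qp p.1) := by
      intro p
      apply integral_congr_ae
      filter_upwards [ae_restrict_mem hT] with x hx
      have hx0 : (0:ℝ) < x := hsub hx
      rw [Real.norm_of_nonneg (mul_nonneg (Real.rpow_nonneg hx0.le _) (Real.exp_pos _).le)]
    calc (∑' p : {p : ℤ × ℤ // p ≠ 0}, ∫ α in T, α^(s-1) * rexp (-(2*π*α) * Qp p.1))
        = ∫ α in T, ∑' p : {p : ℤ × ℤ // p ≠ 0}, α^(s-1) * rexp (-(2*π*α) * Qp p.1) :=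
          integral_tsum_of_summable_integral_norm hint
            (hsum2.congr fun p => (hnorm p).symm)
      _ = ∫ α in T, α^(s-1) * g α :=
          integral_congr_ae (Filter.Eventually.of_forall fun α => by
            show (∑' p : {p : ℤ × ℤ // p ≠ 0}, α^(s-1) * rexp (-(2*π*α) * Qp p.1))
              = α^(s-1) * g α
            rw [tsum_mul_left])
  have key1 : (∑' p : {p : ℤ × ℤ // p ≠ 0}, (Qp p.1)^(-s)) * Real.Gamma s * (2*π)^(-s)
      = (∑' p : {p : ℤ × ℤ // p ≠ 0}, ∫ α in Ioc 0 1, α^(s-1) * rexp (-(2*π*α) * Qp p.1))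
        + ∑' p : {p : ℤ × ℤ // p ≠ 0}, ∫ α in Ioi 1, α^(s-1) * rexp (-(2*π*α) * Qp p.1) := by
    rw [← tsum_mul_right, ← tsum_mul_right,
      tsum_congr (fun p => ((hFval p).trans (hsplitInt p)))]
    exact Summable.tsum_add h1sum h2sum
  have key2 : (∑' p : {p : ℤ × ℤ // p ≠ 0}, ∫ α in Ioc 0 1, α^(s-1) * rexp (-(2*π*α) * Qp p.1))
      = ∫ α in Ioc 0 1, α^(s-1) * g α :=
    hexch _ measurableSet_Ioc Set.Ioc_subset_Ioi_self hIocInt h1sum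
  have key3 : (∑' p : {p : ℤ × ℤ // p ≠ 0}, ∫ α in Ioi 1, α^(s-1) * rexp (-(2*π*α) * Qp p.1))
      = ∫ α in Ioi 1, α^(s-1) * g α :=
    hexch _ measurableSet_Ioi (Set.Ioi_subset_Ioi zero_le_one) hIoiInt h2sum
  -- integrability of weighted g
  have hIw : ∀ e : ℝ, IntegrableOn (fun α => α^e * g α) (Ioi 1) := by
    intro e
    have hb : (0:ℝ) < 2*π*δ := by positivity
    have hbnd : IntegrableOn
        (fun α : ℝ => (g 1 * rexp (2*π*δ)) * (α^(max e 0) * rexp (-(2*π*δ)*α))) (Ioi 1) := by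
      have h0 := integrableOn_rpow_mul_exp_neg_mul_rpow (p := 1)
        (show (-1:ℝ) < max e 0 from lt_of_lt_of_le neg_one_lt_zero (le_max_right e 0)) one_pos hb
      have h1 : IntegrableOn (fun x : ℝ => x ^ max e 0 * rexp (-(2*π*δ) * x)) (Ioi 0) := by
        refine h0.congr_fun (fun x hx => ?_) measurableSet_Ioi
        simp only [Real.rpow_one]
      exact ((h1.mono_set (Set.Ioi_subset_Ioi zero_le_one)).const_mul _)
    refine Integrable.mono' hbnd ?_ ?_
    · exact ((by fun_prop : Measurable fun α : ℝ => α^e).mul hg_meas).aestronglyMeasurable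
    · filter_upwards [ae_restrict_mem measurableSet_Ioi] with α hα
      have h1α : (1:ℝ) ≤ α := le_of_lt hα
      have h0α : (0:ℝ) < α := lt_of_lt_of_le one_pos h1α
      rw [Real.norm_of_nonneg (mul_nonneg (Real.rpow_nonneg h0α.le _) (hg_nonneg α))]
      calc α^e * g α ≤ α^(max e 0) * g α :=
            mul_le_mul_of_nonneg_right
              (Real.rpow_le_rpow_of_exponent_le h1α (le_max_left e 0)) (hg_nonneg α)
        _ ≤ α^(max e 0) * ((g 1 * rexp (2*π*δ)) * rexp (-(2*π*δ)*α)) :=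
            mul_le_mul_of_nonneg_left (hg_le α h1α) (Real.rpow_nonneg h0α.le _)
        _ = (g 1 * rexp (2*π*δ)) * (α^(max e 0) * rexp (-(2*π*δ)*α)) := by ring
  have hrpowInt : ∀ e : ℝ, -1 < e → IntegrableOn (fun α : ℝ => α^e) (Ioo 0 1) := by
    intro e he
    have h0 := intervalIntegral.intervalIntegrable_rpow' (r := e) (a := 0) (b := 1) he
    rw [intervalIntegrable_iff] at h0
    refine h0.mono_set ?_
    rw [Set.uIoc_of_le (zero_le_one (α := ℝ))]
    exact Set.Ioo_subset_Ioc_self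
  have hIw2 : IntegrableOn (fun α => α^(s-2) * g α⁻¹) (Ioo 0 1) := by
    have hbnd : IntegrableOn (fun α : ℝ => (g 1 * rexp (2*π*δ)) * α^(s-2)) (Ioo 0 1) :=
      (hrpowInt (s-2) (by linarith)).const_mul _
    refine Integrable.mono' hbnd ?_ ?_
    · exact ((by fun_prop : Measurable fun α : ℝ => α^(s-2)).mul
        (hg_meas.comp measurable_inv)).aestronglyMeasurable
    · filter_upwards [ae_restrict_mem measurableSet_Ioo] with α hα
      have h0 : (0:ℝ) < α := hα.1
      have hinv1 : (1:ℝ) ≤ α⁻¹ := by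
        nlinarith [mul_inv_cancel₀ h0.ne', inv_pos.mpr h0,
          mul_nonneg (le_of_lt (inv_pos.mpr h0)) (sub_nonneg.mpr hα.2.le)]
      rw [Real.norm_of_nonneg (mul_nonneg (Real.rpow_nonneg h0.le _) (hg_nonneg _))]
      calc α^(s-2) * g α⁻¹
          ≤ α^(s-2) * ((g 1 * rexp (2*π*δ)) * rexp (-(2*π*δ)*α⁻¹)) :=
            mul_le_mul_of_nonneg_left (hg_le _ hinv1) (Real.rpow_nonneg h0.le _)
        _ ≤ α^(s-2) * ((g 1 * rexp (2*π*δ)) * 1) := by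
            refine mul_le_mul_of_nonneg_left (mul_le_mul_of_nonneg_left
              (Real.exp_le_one_iff.mpr ?_)
              (mul_nonneg (hg_nonneg 1) (Real.exp_pos _).le)) (Real.rpow_nonneg h0.le _)
            nlinarith [mul_pos (mul_pos pi_pos hδpos) (inv_pos.mpr h0)]
        _ = (g 1 * rexp (2*π*δ)) * α^(s-2) := by ring
  -- change of variables
  have hcov : (∫ α in Ioo (0:ℝ) 1, α^(s-2) * g α⁻¹) = ∫ α in Ioi (1:ℝ), α^(-s) * g α := by
    have h := MeasureTheory.integral_comp_rpow_Ioi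
      ((Ioi (1:ℝ)).indicator (fun y => y^(-s) * g y)) (p := -1) (by norm_num)
    rw [integral_indicator measurableSet_Ioi, Measure.restrict_restrict measurableSet_Ioi,
      Set.inter_eq_self_of_subset_left (Set.Ioi_subset_Ioi zero_le_one)] at h
    rw [← h]
    have heq : Set.EqOn
        (fun x : ℝ => (|(-1:ℝ)| * x ^ ((-1:ℝ) - 1)) •
          (Ioi (1:ℝ)).indicator (fun y => y^(-s) * g y) (x ^ (-1:ℝ)))
        ((Ioo (0:ℝ) 1).indicator (fun x => x^(s-2) * g x⁻¹)) (Ioi 0) := by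
      intro x hx
      have hx0 : (0:ℝ) < x := hx
      simp only [abs_neg, abs_one, one_mul, smul_eq_mul, Real.rpow_neg_one]
      by_cases hx1 : x < 1
      · have hmem1 : x⁻¹ ∈ Ioi (1:ℝ) := by
          have h2 := mul_lt_mul_of_pos_left hx1 (inv_pos.mpr hx0)
          rw [inv_mul_cancel₀ hx0.ne', mul_one] at h2
          exact h2
        rw [Set.indicator_of_mem hmem1, Set.indicator_of_mem (show x ∈ Ioo (0:ℝ) 1 from ⟨hx0, hx1⟩)]
        have h1 : (x⁻¹)^(-s) = x^s := by
          rw [← Real.rpow_neg_one x, ← Real.rpow_mul hx0.le]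
          norm_num
        rw [h1, show ((-1:ℝ)-1) = (-2:ℝ) by norm_num,
          show (s-2:ℝ) = -2 + s by ring, Real.rpow_add hx0]
        ring
      · have hnot2 : x⁻¹ ∉ Ioi (1:ℝ) := by
          intro hmem
          have h2 := mul_lt_mul_of_pos_left hmem hx0
          rw [mul_inv_cancel₀ hx0.ne', mul_one] at h2
          exact hx1 h2
        have hnot1 : x ∉ Ioo (0:ℝ) 1 := fun hmem => hx1 (Set.mem_Ioo.mp hmem).2
        rw [Set.indicator_of_notMem hnot1, Set.indicator_of_notMem hnot2, mul_zero]
    rw [setIntegral_congr_fun measurableSet_Ioi heq, integral_indicator measurableSet_Ioo,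
      Measure.restrict_restrict measurableSet_Ioo,
      Set.inter_eq_self_of_subset_left (fun x hx => hx.1)]
  -- boundary integrals
  have hbdry1 : (∫ α in Ioo (0:ℝ) 1, α^(s-2)) = 1/(s-1) := by
    rw [← integral_Ioc_eq_integral_Ioo, ← intervalIntegral.integral_of_le (zero_le_one (α := ℝ)),
      integral_rpow (Or.inl (by linarith : (-1:ℝ) < s-2)),
      Real.zero_rpow (by intro hzero; linarith : s-2+1 ≠ 0), Real.one_rpow,
      show s-2+1 = s-1 by ring]
    norm_num
  have hbdry2 : (∫ α in Ioo (0:ℝ) 1, α^(s-1)) = 1/s := by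
    rw [← integral_Ioc_eq_integral_Ioo, ← intervalIntegral.integral_of_le (zero_le_one (α := ℝ)),
      integral_rpow (Or.inl (by linarith : (-1:ℝ) < s-1)),
      Real.zero_rpow (by intro hzero; linarith : s-1+1 ≠ 0), Real.one_rpow,
      show s-1+1 = s by ring]
    norm_num
  -- the Ioc piece
  have hIocval : (∫ α in Ioc 0 1, α^(s-1) * g α)
      = (1/(s-1) - 1/s) + ∫ α in Ioi 1, α^(-s) * g α := by
    rw [integral_Ioc_eq_integral_Ioo]
    have hpt : ∀ α ∈ Ioo (0:ℝ) 1, α^(s-1) * g α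
        = α^(s-2) * g α⁻¹ + (α^(s-2) - α^(s-1)) := by
      intro α hα
      have h0 : (0:ℝ) < α := hα.1
      have h2 : α^(s-2) = α^(s-1) * α⁻¹ := by
        rw [show s-2 = (s-1) + (-1) by ring, Real.rpow_add h0, Real.rpow_neg_one]
      rw [hgFE h0, h2]
      ring
    have hint2 : IntegrableOn (fun α : ℝ => α^(s-2) - α^(s-1)) (Ioo 0 1) :=
      (hrpowInt (s-2) (by linarith)).sub (hrpowInt (s-1) (by linarith))
    have hint3 : IntegrableOn (fun α : ℝ => α^(s-2)) (Ioo 0 1) := hrpowInt (s-2) (by linarith)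
    have hint4 : IntegrableOn (fun α : ℝ => α^(s-1)) (Ioo 0 1) := hrpowInt (s-1) (by linarith)
    rw [setIntegral_congr_fun measurableSet_Ioo hpt,
      integral_add hIw2 hint2, integral_sub hint3 hint4, hbdry1, hbdry2, hcov]
    ring
  -- final RHS matching
  have hRHS : (∫ α in Ioi (1:ℝ),
        ((∑' p : ℤ × ℤ, rexp (-2*π*α*‖(p.1:ℝ) • u + (p.2:ℝ) • v‖^2)) - 1)
          * (α^s + α^(1-s)) / α)
      = (∫ α in Ioi 1, α^(s-1) * g α) + ∫ α in Ioi 1, α^(-s) * g α := by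
    rw [← integral_add (hIw (s-1)) (hIw (-s))]
    refine setIntegral_congr_fun measurableSet_Ioi (fun α hα => ?_)
    have h0 : (0:ℝ) < α := lt_trans one_pos hα
    have hT : (∑' p : ℤ × ℤ, rexp (-2*π*α*‖(p.1:ℝ) • u + (p.2:ℝ) • v‖^2))
        = 1 + g α := by
      rw [← hfull h0]
      refine tsum_congr fun p => ?_
      rw [hQ p.1 p.2]
      congr 1
      ring
    rw [hT]
    have e1 : α^(s-1) = α^s / α := Real.rpow_sub_one h0.ne' s
    have e2 : α^(-s) = α^(1-s) / α := by
      rw [show -s = (1-s) - 1 by ring]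
      exact Real.rpow_sub_one h0.ne' (1-s)
    rw [e1, e2]
    field_simp
    ring
  -- put everything together
  have hLR : (∑' p : {p : ℤ × ℤ // p ≠ 0}, ‖(p.1.1:ℝ) • u + (p.1.2:ℝ) • v‖ ^ (-(2*s)))
      = ∑' p : {p : ℤ × ℤ // p ≠ 0}, (Qp p.1)^(-s) := by
    refine tsum_congr fun p => ?_
    rw [show -(2*s) = (2:ℝ)*(-s) by ring, Real.rpow_mul (norm_nonneg _),
      show ((2:ℝ)) = ((2:ℕ):ℝ) by norm_num, Real.rpow_natCast, hQ p.1.1 p.1.2]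
  rw [hLR, key1, key2, key3, hIocval, hRHS]
  ring
end
end

section
/- There exists A* > 0 such that for every A ≥ A*, the triangular lattice Λ_A is not a minimizer of the Lennard-Jones energy among Bravais lattices of area A: there exists a Bravais lattice L of ℝ² with |L| = A and E_LJ(L) < E_LJ(Λ_A). -/
noncomputable section
open Real

/-! ### Auxiliary material -/

section Aux

lemma smul_add_vec2 (m n a b c d : ℝ) :
    m • vec2 a b + n • vec2 c d = vec2 (m*a+n*c) (m*b+n*d) := by
  ext i
  fin_cases i <;>
    simp [vec2, WithLp.equiv_symm_apply, PiLp.add_apply, PiLp.smul_apply, smul_eq_mul]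

lemma norm_vec2 (x y : ℝ) : ‖vec2 x y‖ = Real.sqrt (x^2 + y^2) := by
  rw [EuclideanSpace.norm_eq]
  simp [vec2, Fin.sum_univ_two, WithLp.equiv_symm_apply, sq_abs]

lemma norm_vec2_sq (x y : ℝ) : ‖vec2 x y‖^2 = x^2 + y^2 := by
  rw [norm_vec2, sq_sqrt (by positivity)]

lemma vec2_eq_zero_iff {x y : ℝ} : vec2 x y = 0 ↔ x = 0 ∧ y = 0 := by
  constructor
  · intro h
    have h0 := congrFun (congrArg (WithLp.equiv 2 (Fin 2 → ℝ)) h) 0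
    have h1 := congrFun (congrArg (WithLp.equiv 2 (Fin 2 → ℝ)) h) 1
    simp [vec2] at h0 h1
    exact ⟨h0, h1⟩
  · rintro ⟨rfl, rfl⟩
    ext i; fin_cases i <;> simp [vec2, WithLp.equiv_symm_apply]

def combo (u v : R2) (p : ℤ × ℤ) : R2 := (p.1 : ℝ) • u + (p.2 : ℝ) • v

lemma combo_eq_zero_iff {u v : R2} (h : LinearIndependent ℝ ![u, v]) {p : ℤ × ℤ} :
    combo u v p = 0 ↔ p = 0 := by
  constructor
  · intro hz
    obtain ⟨h1, h2⟩ := (LinearIndependent.pair_iff.mp h) _ _ hz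
    have hp1 : p.1 = 0 := by exact_mod_cast h1
    have hp2 : p.2 = 0 := by exact_mod_cast h2
    exact Prod.ext hp1 hp2
  · rintro rfl; simp [combo]

lemma combo_injective {u v : R2} (h : LinearIndependent ℝ ![u, v]) :
    Function.Injective (combo u v) := by
  intro p q hpq
  have hz : combo u v (p - q) = 0 := by
    simp only [combo] at *
    push_cast [Prod.fst_sub, Prod.snd_sub]
    rw [sub_smul, sub_smul]
    rw [show ((p.1:ℝ) • u - (q.1:ℝ) • u) + ((p.2:ℝ) • v - (q.2:ℝ) • v)
        = ((p.1:ℝ) • u + (p.2:ℝ) • v) - ((q.1:ℝ) • u + (q.2:ℝ) • v) by abel, hpq, sub_self]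
  exact sub_eq_zero.mp ((combo_eq_zero_iff h).mp hz)

def latticeEquiv (u v : R2) (h : LinearIndependent ℝ ![u, v]) :
    {p : ℤ × ℤ // p ≠ 0} ≃
      {x : R2 // x ∈ {x : R2 | ∃ m n : ℤ, x = (m : ℝ) • u + (n : ℝ) • v} ∧ x ≠ 0} := by
  apply Equiv.ofBijective
    (fun p => (⟨combo u v p.1, ⟨p.1.1, p.1.2, by simp [combo]⟩, by
      simpa [combo_eq_zero_iff h] using p.2⟩ :
      {x : R2 // x ∈ {x : R2 | ∃ m n : ℤ, x = (m : ℝ) • u + (n : ℝ) • v} ∧ x ≠ 0}))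
  constructor
  · intro p q hpq
    exact Subtype.ext (combo_injective h (congrArg Subtype.val hpq))
  · rintro ⟨x, ⟨m, n, rfl⟩, hx⟩
    refine ⟨⟨(m, n), ?_⟩, rfl⟩
    intro hz
    exact hx (by rw [show ((m:ℝ) • u + (n:ℝ) • v) = combo u v (m, n) from rfl,
      (combo_eq_zero_iff h).mpr hz])

lemma ELJ_eq (u v : R2) (h : LinearIndependent ℝ ![u, v]) :
    ELJ {x : R2 | ∃ m n : ℤ, x = (m : ℝ) • u + (n : ℝ) • v}
      = ∑' p : {p : ℤ × ℤ // p ≠ 0}, VLJ ‖combo u v p.1‖ :=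
  ((latticeEquiv u v h).tsum_eq fun x => VLJ ‖(x : R2)‖).symm

/-! ### elementary inequalities for zpow -/

lemma zpow_neg_le {a b : ℝ} (ha : 0 < a) (hab : a ≤ b) (n : ℕ) :
    b ^ (-(n:ℤ)) ≤ a ^ (-(n:ℤ)) := by
  rw [zpow_neg, zpow_neg, zpow_natCast, zpow_natCast]
  exact inv_anti₀ (pow_pos ha n) (pow_le_pow_left₀ ha.le hab n)

lemma zpow_neg3_le {a b : ℝ} (ha : 0 < a) (hab : a ≤ b) : b ^ (-3:ℤ) ≤ a ^ (-3:ℤ) := by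
  have := zpow_neg_le ha hab 3; norm_num at this ⊢; exact this

lemma VLJ_eq_w {r : ℝ} : VLJ r = (r^2)^(-6:ℤ) - 2 * (r^2)^(-3:ℤ) := by
  by_cases h : r = 0
  · simp [VLJ, h, zero_zpow]
  · rw [VLJ]
    rw [show ((r^2)^(-6:ℤ)) = r ^ (-12:ℤ) by
      rw [← zpow_natCast r 2, ← zpow_mul]; norm_num]
    rw [show ((r^2)^(-3:ℤ)) = r ^ (-6:ℤ) by
      rw [← zpow_natCast r 2, ← zpow_mul]; norm_num]

lemma W_ge {w : ℝ} (hw : 0 < w) : -2 * w^(-3:ℤ) ≤ w^(-6:ℤ) - 2*w^(-3:ℤ) := by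
  have : (0:ℝ) ≤ w^(-6:ℤ) := by positivity
  linarith

lemma W_le_zero {w : ℝ} (hw : 1 ≤ w) : w^(-6:ℤ) - 2*w^(-3:ℤ) ≤ 0 := by
  have h1 : w^(-6:ℤ) ≤ w^(-3:ℤ) := by
    rw [zpow_neg, zpow_neg]
    apply inv_anti₀ (by positivity)
    calc w^(3:ℤ) = w^(3:ℕ) := by norm_cast
    _ ≤ w^(6:ℕ) := pow_le_pow_right₀ hw (by norm_num)
    _ = w^(6:ℤ) := by norm_cast
  have h2 : (0:ℝ) ≤ w^(-3:ℤ) := by positivity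
  linarith

lemma W_abs_le {w q : ℝ} (hq : 1 ≤ q) (hw : q ≤ w) :
    |w^(-6:ℤ) - 2*w^(-3:ℤ)| ≤ 3 * q^(-3:ℤ) := by
  have hw1 : (1:ℝ) ≤ w := le_trans hq hw
  have h6 : w^(-6:ℤ) ≤ q^(-3:ℤ) := by
    calc w^(-6:ℤ) ≤ w^(-3:ℤ) := by
          rw [zpow_neg, zpow_neg]
          apply inv_anti₀ (by positivity)
          calc w^(3:ℤ) = w^(3:ℕ) := by norm_cast
          _ ≤ w^(6:ℕ) := pow_le_pow_right₀ hw1 (by norm_num)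
          _ = w^(6:ℤ) := by norm_cast
    _ ≤ q^(-3:ℤ) := zpow_neg3_le (by linarith) hw
  have h3 : w^(-3:ℤ) ≤ q^(-3:ℤ) := zpow_neg3_le (by linarith) hw
  have hp6 : (0:ℝ) ≤ w^(-6:ℤ) := by positivity
  have hp3 : (0:ℝ) ≤ w^(-3:ℤ) := by positivity
  rw [abs_le]
  constructor <;> nlinarith [zpow_neg3_le (by linarith : (0:ℝ) < 1) hq]

/-! ### summability over `ℤ × ℤ` -/

def Q (p : ℤ × ℤ) : ℝ := (p.1 : ℝ) ^ 2 + (p.2 : ℝ) ^ 2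

lemma one_le_Q {p : ℤ × ℤ} (hp : p ≠ 0) : 1 ≤ Q p := by
  have h : p.1 ≠ 0 ∨ p.2 ≠ 0 := by
    by_contra hc; push_neg at hc; exact hp (Prod.ext hc.1 hc.2)
  rcases h with h | h
  · have h1 : (1:ℤ) ≤ p.1^2 := by nlinarith [Int.one_le_abs h, sq_abs p.1, abs_nonneg p.1]
    have : (1:ℝ) ≤ (p.1:ℝ)^2 := by exact_mod_cast h1
    have := sq_nonneg ((p.2:ℝ)); unfold Q; nlinarith
  · have h1 : (1:ℤ) ≤ p.2^2 := by nlinarith [Int.one_le_abs h, sq_abs p.2, abs_nonneg p.2]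
    have : (1:ℝ) ≤ (p.2:ℝ)^2 := by exact_mod_cast h1
    have := sq_nonneg ((p.1:ℝ)); unfold Q; nlinarith

lemma Q_pos {p : ℤ × ℤ} (hp : p ≠ 0) : 0 < Q p := lt_of_lt_of_le one_pos (one_le_Q hp)

lemma summable_Qinv3 : Summable (fun p : {p : ℤ × ℤ // p ≠ 0} => (Q p.1) ^ (-3 : ℤ)) := by
  have hsum : Summable fun x : Fin 2 → ℤ => ‖x‖ ^ (-(6:ℝ)) :=
    EisensteinSeries.summable_one_div_norm_rpow (by norm_num)
  have hsum2 : Summable fun p : ℤ × ℤ => ‖(finTwoArrowEquiv ℤ).symm p‖ ^ (-(6:ℝ)) :=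
    (Equiv.summable_iff (finTwoArrowEquiv ℤ).symm).mpr hsum
  have hsub := hsum2.subtype {p : ℤ × ℤ | p ≠ 0}
  refine Summable.of_nonneg_of_le (fun p => zpow_nonneg (Q_pos p.2).le _) (fun p => ?_) hsub
  set x : Fin 2 → ℤ := (finTwoArrowEquiv ℤ).symm p.1 with hx
  have hnorm : ‖x‖ = ((max (p.1.1.natAbs) (p.1.2.natAbs) : ℕ) : ℝ) := by
    rw [EisensteinSeries.norm_eq_max_natAbs]
    simp [hx, finTwoArrowEquiv]
  have h1 : p.1.1 ≠ 0 ∨ p.1.2 ≠ 0 := by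
    by_contra hc; push_neg at hc; exact p.2 (Prod.ext hc.1 hc.2)
  have hn1 : (1:ℝ) ≤ ‖x‖ := by
    rw [hnorm]
    have : 1 ≤ max (p.1.1.natAbs) (p.1.2.natAbs) := by
      rcases h1 with h | h
      · exact le_trans (Int.natAbs_pos.mpr h) (le_max_left _ _)
      · exact le_trans (Int.natAbs_pos.mpr h) (le_max_right _ _)
    exact_mod_cast this
  have hQle : ‖x‖^2 ≤ Q p.1 := by
    rw [hnorm, Q]
    have e1 : ((p.1.1.natAbs : ℝ))^2 = (p.1.1:ℝ)^2 := by
      rw [Nat.cast_natAbs]; push_cast; rw [sq_abs]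
    have e2 : ((p.1.2.natAbs : ℝ))^2 = (p.1.2:ℝ)^2 := by
      rw [Nat.cast_natAbs]; push_cast; rw [sq_abs]
    rw [← e1, ← e2]
    rcases max_cases (p.1.1.natAbs) (p.1.2.natAbs) with ⟨hm, _⟩ | ⟨hm, _⟩ <;>
      · rw [hm]
        first
        | exact le_add_of_nonneg_right (by positivity)
        | exact le_add_of_nonneg_left (by positivity)
  have hrw : ‖x‖ ^ (-(6:ℝ)) = (‖x‖^2) ^ (-3:ℤ) := by
    rw [show (-(6:ℝ)) = ((-6:ℤ):ℝ) by norm_num, Real.rpow_intCast,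
      show ((‖x‖^2)^(-3:ℤ)) = ‖x‖^(-6:ℤ) by
        rw [← zpow_natCast ‖x‖ 2, ← zpow_mul]; norm_num]
  show Q p.1 ^ (-3:ℤ) ≤ ‖x‖ ^ (-(6:ℝ))
  rw [hrw]
  exact zpow_neg3_le (by nlinarith : (0:ℝ) < ‖x‖^2) hQle

/-- The constant `S = ∑ (m²+n²)⁻³`. -/
def Sconst : ℝ := ∑' p : {p : ℤ × ℤ // p ≠ 0}, (Q p.1) ^ (-3 : ℤ)

lemma Sconst_nonneg : 0 ≤ Sconst :=
  tsum_nonneg fun p => zpow_nonneg (Q_pos p.2).le _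

end Aux

section Tri

variable {A : ℝ}

lemma sqrt3_pos : (0:ℝ) < Real.sqrt 3 := Real.sqrt_pos.mpr (by norm_num)
lemma sqrt3_le_two : Real.sqrt 3 ≤ 2 := by
  nlinarith [Real.sq_sqrt (by norm_num : (0:ℝ) ≤ 3), Real.sqrt_nonneg 3]
lemma one_le_sqrt3 : (1:ℝ) ≤ Real.sqrt 3 := by
  nlinarith [Real.sq_sqrt (by norm_num : (0:ℝ) ≤ 3), Real.sqrt_nonneg 3]

lemma tri_c_sq (hA : 0 ≤ A) : (Real.sqrt (2 * A / Real.sqrt 3))^2 = 2 * A / Real.sqrt 3 :=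
  Real.sq_sqrt (by positivity)

lemma tri_combo (p : ℤ × ℤ) :
    combo (Real.sqrt (2 * A / Real.sqrt 3) • vec2 1 0)
      (Real.sqrt (2 * A / Real.sqrt 3) • vec2 (1/2) (Real.sqrt 3 / 2)) p
    = vec2 ((p.1:ℝ) * Real.sqrt (2 * A / Real.sqrt 3) * 1
          + (p.2:ℝ) * Real.sqrt (2 * A / Real.sqrt 3) * (1/2))
        ((p.1:ℝ) * Real.sqrt (2 * A / Real.sqrt 3) * 0
          + (p.2:ℝ) * Real.sqrt (2 * A / Real.sqrt 3) * (Real.sqrt 3 / 2)) := by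
  rw [combo, smul_smul, smul_smul, smul_add_vec2]

lemma tri_norm_sq (hA : 0 ≤ A) (p : ℤ × ℤ) :
    ‖combo (Real.sqrt (2 * A / Real.sqrt 3) • vec2 1 0)
      (Real.sqrt (2 * A / Real.sqrt 3) • vec2 (1/2) (Real.sqrt 3 / 2)) p‖^2
    = (2 * A / Real.sqrt 3) * ((p.1:ℝ)^2 + (p.1:ℝ)*(p.2:ℝ) + (p.2:ℝ)^2) := by
  rw [tri_combo, norm_vec2_sq]
  have h3 : (Real.sqrt 3)^2 = 3 := Real.sq_sqrt (by norm_num)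
  have hc := tri_c_sq hA
  set c := Real.sqrt (2 * A / Real.sqrt 3) with hcdef
  calc ((p.1:ℝ) * c * 1 + (p.2:ℝ) * c * (1/2))^2
        + ((p.1:ℝ) * c * 0 + (p.2:ℝ) * c * (Real.sqrt 3 / 2))^2
      = c^2 * ((p.1:ℝ)^2 + (p.1:ℝ)*(p.2:ℝ) + (p.2:ℝ)^2/4)
        + c^2 * (p.2:ℝ)^2 * (Real.sqrt 3)^2 / 4 := by ring
  _ = c^2 * ((p.1:ℝ)^2 + (p.1:ℝ)*(p.2:ℝ) + (p.2:ℝ)^2/4) + c^2 * (p.2:ℝ)^2 * 3 / 4 := by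
        rw [h3]
  _ = c^2 * ((p.1:ℝ)^2 + (p.1:ℝ)*(p.2:ℝ) + (p.2:ℝ)^2) := by ring
  _ = (2 * A / Real.sqrt 3) * ((p.1:ℝ)^2 + (p.1:ℝ)*(p.2:ℝ) + (p.2:ℝ)^2) := by rw [hc]

lemma tri_indep (hA : 0 < A) :
    LinearIndependent ℝ ![Real.sqrt (2 * A / Real.sqrt 3) • vec2 1 0,
      Real.sqrt (2 * A / Real.sqrt 3) • vec2 (1/2) (Real.sqrt 3 / 2)] := by
  have hc : 0 < Real.sqrt (2 * A / Real.sqrt 3) :=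
    Real.sqrt_pos.mpr (by positivity)
  set c := Real.sqrt (2 * A / Real.sqrt 3)
  rw [LinearIndependent.pair_iff]
  intro s t hst
  rw [smul_smul, smul_smul, smul_add_vec2] at hst
  obtain ⟨h1, h2⟩ := vec2_eq_zero_iff.mp hst
  have ht : t = 0 := by
    have h2' : t * (c * (Real.sqrt 3 / 2)) = 0 := by linarith [h2]
    rcases mul_eq_zero.mp h2' with h | h
    · exact h
    · exfalso; nlinarith [sqrt3_pos]
  refine ⟨?_, ht⟩
  rw [ht] at h1
  have h1' : s * c = 0 := by linarith [h1]
  rcases mul_eq_zero.mp h1' with h | h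
  · exact h
  · exfalso; exact hc.ne' h

lemma tri_norm_sq_ge (hA : 0 ≤ A) (p : ℤ × ℤ) :
    (A / Real.sqrt 3) * Q p ≤
    ‖combo (Real.sqrt (2 * A / Real.sqrt 3) • vec2 1 0)
      (Real.sqrt (2 * A / Real.sqrt 3) • vec2 (1/2) (Real.sqrt 3 / 2)) p‖^2 := by
  rw [tri_norm_sq hA, Q]
  have h1 : 0 ≤ A / Real.sqrt 3 := by positivity
  have h2 : 2 * A / Real.sqrt 3 = 2 * (A / Real.sqrt 3) := by ring
  rw [h2]
  nlinarith [mul_nonneg h1 (sq_nonneg ((p.1:ℝ) + (p.2:ℝ)))]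

/-- Lower bound for the triangular-lattice energy. -/
lemma ELJ_tri_ge (hA : Real.sqrt 3 ≤ A) :
    -2 * ((A / Real.sqrt 3)^3)⁻¹ * Sconst ≤ ELJ (triLattice A) := by
  have hA0 : 0 < A := lt_of_lt_of_le sqrt3_pos hA
  have hrat : 1 ≤ A / Real.sqrt 3 := (one_le_div sqrt3_pos).mpr hA
  set u := Real.sqrt (2 * A / Real.sqrt 3) • vec2 1 0
  set v := Real.sqrt (2 * A / Real.sqrt 3) • vec2 (1/2) (Real.sqrt 3 / 2)
  have hindep := tri_indep hA0
  have hELJ : ELJ (triLattice A) = ∑' p : {p : ℤ × ℤ // p ≠ 0}, VLJ ‖combo u v p.1‖ :=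
    ELJ_eq u v hindep
  rw [hELJ]
  -- notation
  set f : {p : ℤ × ℤ // p ≠ 0} → ℝ := fun p => VLJ ‖combo u v p.1‖ with hf
  have hw : ∀ p : {p : ℤ × ℤ // p ≠ 0},
      (A / Real.sqrt 3) * Q p.1 ≤ ‖combo u v p.1‖^2 := fun p => tri_norm_sq_ge hA0.le p.1
  have hwQ : ∀ p : {p : ℤ × ℤ // p ≠ 0}, Q p.1 ≤ ‖combo u v p.1‖^2 := by
    intro p
    refine le_trans ?_ (hw p)
    nlinarith [Q_pos p.2, one_le_Q p.2]
  -- summability of f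
  have hfs : Summable f := by
    apply Summable.of_abs
    refine Summable.of_nonneg_of_le (fun p => abs_nonneg _) (fun p => ?_)
      (summable_Qinv3.mul_left 3)
    rw [hf]
    simp only
    rw [VLJ_eq_w]
    exact W_abs_le (one_le_Q p.2) (hwQ p)
  -- the comparison function
  set g : {p : ℤ × ℤ // p ≠ 0} → ℝ :=
    fun p => -2 * ((A / Real.sqrt 3)^3)⁻¹ * (Q p.1)^(-3:ℤ) with hg
  have hgs : Summable g := summable_Qinv3.mul_left _
  have hle : ∀ p, g p ≤ f p := by
    intro p
    rw [hf, hg]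
    simp only
    rw [VLJ_eq_w]
    have hwpos : (0:ℝ) < ‖combo u v p.1‖^2 := lt_of_lt_of_le (Q_pos p.2) (hwQ p)
    refine le_trans ?_ (W_ge hwpos)
    have hmono : (‖combo u v p.1‖^2)^(-3:ℤ) ≤ ((A / Real.sqrt 3) * Q p.1)^(-3:ℤ) :=
      zpow_neg3_le (mul_pos (by positivity) (Q_pos p.2)) (hw p)
    have hsplit : ((A / Real.sqrt 3) * Q p.1)^(-3:ℤ)
        = ((A / Real.sqrt 3)^3)⁻¹ * (Q p.1)^(-3:ℤ) := by
      rw [mul_zpow]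
      congr 1
    nlinarith [hmono, hsplit]
  calc -2 * ((A / Real.sqrt 3)^3)⁻¹ * Sconst = ∑' p, g p := by
        rw [hg, Sconst]; exact (tsum_mul_left).symm
  _ ≤ ∑' p, f p := Summable.tsum_le_tsum hle hgs hfs

end Tri

section Thin

variable {A : ℝ}

lemma thin_combo (p : ℤ × ℤ) :
    combo (vec2 1 0) (vec2 0 A) p = vec2 (p.1:ℝ) ((p.2:ℝ) * A) := by
  rw [combo, smul_add_vec2]
  norm_num

lemma thin_norm_sq (p : ℤ × ℤ) :
    ‖combo (vec2 1 0) (vec2 0 A) p‖^2 = (p.1:ℝ)^2 + (p.2:ℝ)^2 * A^2 := by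
  rw [thin_combo, norm_vec2_sq]; ring

lemma thin_indep (hA : A ≠ 0) : LinearIndependent ℝ ![vec2 1 0, vec2 0 A] := by
  rw [LinearIndependent.pair_iff]
  intro s t hst
  rw [smul_add_vec2] at hst
  obtain ⟨h1, h2⟩ := vec2_eq_zero_iff.mp hst
  constructor
  · simpa using h1
  · have h2' : t = 0 ∨ A = 0 := by simpa using h2
    rcases h2' with h | h
    · exact h
    · exact absurd h hA

lemma thin_norm_sq_ge (hA : 1 ≤ A) (p : ℤ × ℤ) :
    Q p ≤ ‖combo (vec2 1 0) (vec2 0 A) p‖^2 := by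
  rw [thin_norm_sq, Q]
  nlinarith [mul_nonneg (sq_nonneg ((p.2:ℝ))) (by nlinarith : (0:ℝ) ≤ A^2 - 1)]

/-- Upper bound for the thin-lattice energy. -/
lemma ELJ_thin_le (hA : 1 ≤ A) :
    ELJ {x : R2 | ∃ m n : ℤ, x = (m : ℝ) • (vec2 1 0) + (n : ℝ) • (vec2 0 A)}
      ≤ -2 + (A^2)⁻¹ * Sconst := by
  have hA0 : (0:ℝ) < A := lt_of_lt_of_le one_pos hA
  have hindep := thin_indep hA0.ne'
  rw [ELJ_eq _ _ hindep]
  set f : {p : ℤ × ℤ // p ≠ 0} → ℝ := fun p => VLJ ‖combo (vec2 1 0) (vec2 0 A) p.1‖ with hf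
  have hwQ : ∀ p : {p : ℤ × ℤ // p ≠ 0},
      Q p.1 ≤ ‖combo (vec2 1 0) (vec2 0 A) p.1‖^2 := fun p => thin_norm_sq_ge hA p.1
  have hfs : Summable f := by
    apply Summable.of_abs
    refine Summable.of_nonneg_of_le (fun p => abs_nonneg _) (fun p => ?_)
      (summable_Qinv3.mul_left 3)
    rw [hf]; simp only
    rw [VLJ_eq_w]
    exact W_abs_le (one_le_Q p.2) (hwQ p)
  -- comparison functions
  set h : {p : ℤ × ℤ // p ≠ 0} → ℝ := fun p => (A^2)⁻¹ * (Q p.1)^(-3:ℤ) with hh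
  set c : {p : ℤ × ℤ // p ≠ 0} → ℝ :=
    fun p => if p.1 = (1,0) ∨ p.1 = (-1,0) then (-1:ℝ) else 0 with hc
  have hhs : Summable h := summable_Qinv3.mul_left _
  -- c has finite support
  have e1 : ((1:ℤ),(0:ℤ)) ≠ (0 : ℤ × ℤ) := by decide
  have e2 : ((-1:ℤ),(0:ℤ)) ≠ (0 : ℤ × ℤ) := by decide
  set P1 : {p : ℤ × ℤ // p ≠ 0} := ⟨(1,0), e1⟩
  set P2 : {p : ℤ × ℤ // p ≠ 0} := ⟨(-1,0), e2⟩
  have hcvanish : ∀ p ∉ ({P1, P2} : Finset {p : ℤ × ℤ // p ≠ 0}), c p = 0 := by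
    intro p hp
    rw [hc]; simp only
    rw [if_neg]
    rintro (h | h)
    · exact hp (Finset.mem_insert.mpr (Or.inl (Subtype.ext h)))
    · exact hp (Finset.mem_insert.mpr (Or.inr (Finset.mem_singleton.mpr (Subtype.ext h))))
  have hcs : Summable c := summable_of_ne_finset_zero hcvanish
  have hcsum : ∑' p, c p = -2 := by
    rw [tsum_eq_sum hcvanish]
    have hne : P1 ≠ P2 := by
      intro h
      have := congrArg (fun q => q.1.1) h
      simp [P1, P2] at this
    rw [Finset.sum_pair hne]
    rw [hc]; norm_num [P1, P2]
  -- pointwise bound f ≤ h + c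
  have hle : ∀ p, f p ≤ h p + c p := by
    intro p
    rw [hf, hh, hc]; simp only
    rw [VLJ_eq_w]
    set w := ‖combo (vec2 1 0) (vec2 0 A) p.1‖^2 with hwdef
    have hw1 : (1:ℝ) ≤ w := le_trans (one_le_Q p.2) (hwQ p)
    have hhp : (0:ℝ) ≤ (A^2)⁻¹ * (Q p.1)^(-3:ℤ) :=
      mul_nonneg (by positivity) (zpow_nonneg (Q_pos p.2).le _)
    by_cases hn : p.1.2 = 0
    · -- on the axis
      by_cases hm : p.1 = (1,0) ∨ p.1 = (-1,0)
      · rw [if_pos hm]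
        have hw : w = 1 := by
          rw [hwdef, thin_norm_sq]
          rcases hm with h | h <;> rw [h] <;> norm_num
        rw [hw]
        norm_num
        exact hhp
      · rw [if_neg hm]
        have := W_le_zero hw1
        linarith
    · -- off the axis: w ≥ A², w ≥ Q, so w⁻⁶ ≤ A⁻² Q⁻³ and the well part is ≤ 0
      rw [if_neg ?side]
      case side =>
        rintro (h | h) <;> rw [h] at hn <;> exact hn rfl
      have hA2w : A^2 ≤ w := by
        rw [hwdef, thin_norm_sq]
        have h2 : (1:ℝ) ≤ (p.1.2:ℝ)^2 := by
          have h1 : (1:ℤ) ≤ p.1.2^2 := by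
            nlinarith [Int.one_le_abs hn, sq_abs p.1.2, abs_nonneg p.1.2]
          exact_mod_cast h1
        nlinarith [sq_nonneg ((p.1.1:ℝ)), sq_nonneg A]
      have hQw : Q p.1 ≤ w := hwQ p
      have hQ1 : (1:ℝ) ≤ Q p.1 := one_le_Q p.2
      -- w^{-6} ≤ A⁻² Q⁻³
      have key : w^(-6:ℤ) ≤ (A^2)⁻¹ * (Q p.1)^(-3:ℤ) := by
        have hz6 : w^(-6:ℤ) = (w^(6:ℕ))⁻¹ := by
          rw [zpow_neg]; norm_cast
        have hz3 : (Q p.1)^(-3:ℤ) = ((Q p.1)^(3:ℕ))⁻¹ := by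
          rw [zpow_neg]; norm_cast
        rw [hz6, hz3, ← mul_inv]
        apply inv_anti₀
        · positivity
        · have h1 : (Q p.1)^(3:ℕ) ≤ w^(3:ℕ) := pow_le_pow_left₀ (Q_pos p.2).le hQw 3
          have h2 : A^2 * (Q p.1)^(3:ℕ) ≤ w * w^(3:ℕ) :=
            mul_le_mul hA2w h1 (by positivity) (by nlinarith)
          calc A^2 * (Q p.1)^(3:ℕ) ≤ w * w^(3:ℕ) := h2
          _ = w^(4:ℕ) := by ring
          _ ≤ w^(6:ℕ) := pow_le_pow_right₀ hw1 (by norm_num)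
      have hW3 : (0:ℝ) ≤ w^(-3:ℤ) := zpow_nonneg (by linarith) _
      linarith
  calc ∑' p, f p ≤ ∑' p, (h p + c p) := Summable.tsum_le_tsum hle hfs (hhs.add hcs)
  _ = (∑' p, h p) + ∑' p, c p := Summable.tsum_add hhs hcs
  _ = (A^2)⁻¹ * Sconst + (-2) := by
      rw [hcsum, hh, Sconst, tsum_mul_left]
  _ = -2 + (A^2)⁻¹ * Sconst := by ring

end Thin

section Final

lemma thin_area {A : ℝ} (hA : 0 < A) :
    ‖vec2 1 0‖ * ‖vec2 0 A‖ * |Real.sin (InnerProductGeometry.angle (vec2 1 0) (vec2 0 A))| = A := by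
  have hinner : (inner ℝ (vec2 1 0) (vec2 0 A) : ℝ) = 0 := by
    rw [PiLp.inner_apply]
    simp [vec2, Fin.sum_univ_two, WithLp.equiv_symm_apply, RCLike.inner_apply]
  have hangle := (InnerProductGeometry.inner_eq_zero_iff_angle_eq_pi_div_two
    (vec2 1 0) (vec2 0 A)).mp hinner
  rw [hangle, Real.sin_pi_div_two, abs_one, mul_one, norm_vec2, norm_vec2]
  rw [show (1:ℝ)^2 + 0^2 = 1 by norm_num, show (0:ℝ)^2 + A^2 = A^2 by norm_num,
    Real.sqrt_one, Real.sqrt_sq hA.le, one_mul]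

end Final

/-- For all sufficiently large areas `A`, the triangular lattice `Λ_A` is not a minimizer of
the Lennard-Jones energy among Bravais lattices of area `A`. -/
theorem triangular_not_minimizer_of_large_area :
    ∃ Astar : ℝ, 0 < Astar ∧ ∀ A : ℝ, Astar ≤ A →
      ∃ L : Set R2, IsBravais L ∧ HasArea L A ∧ ELJ L < ELJ (triLattice A) := by
  refine ⟨Real.sqrt 3 + 2 + 22 * Sconst, by nlinarith [sqrt3_pos, Sconst_nonneg], ?_⟩
  intro A hA
  have hS := Sconst_nonneg
  have hA2 : (2:ℝ) ≤ A := by nlinarith [sqrt3_pos]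
  have hAs : 22 * Sconst ≤ A := by nlinarith [sqrt3_pos]
  have hA3 : Real.sqrt 3 ≤ A := by nlinarith
  have hA1 : (1:ℝ) ≤ A := by linarith
  have hA0 : (0:ℝ) < A := by linarith
  refine ⟨{x : R2 | ∃ m n : ℤ, x = (m : ℝ) • (vec2 1 0) + (n : ℝ) • (vec2 0 A)},
    ⟨vec2 1 0, vec2 0 A, thin_indep hA0.ne', rfl⟩,
    ⟨vec2 1 0, vec2 0 A, ⟨thin_indep hA0.ne', rfl⟩, thin_area hA0⟩, ?_⟩
  have hthin := ELJ_thin_le hA1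
  have htri := ELJ_tri_ge hA3
  -- numeric comparison
  have hA2pos : (0:ℝ) < A^2 := by positivity
  have h44 : 44 * Sconst ≤ A^2 := by nlinarith
  have h1 : (A^2)⁻¹ * Sconst ≤ 1/44 := by
    rw [show (A^2)⁻¹ * Sconst = Sconst / A^2 by ring,
      div_le_div_iff₀ hA2pos (by norm_num : (0:ℝ) < 44)]
    linarith
  have hd : A/2 ≤ A/Real.sqrt 3 :=
    div_le_div_of_nonneg_left hA0.le sqrt3_pos sqrt3_le_two
  have hpos : (0:ℝ) < (A/2)^3 := by positivity
  have hmono : ((A/Real.sqrt 3)^3)⁻¹ ≤ ((A/2)^3)⁻¹ :=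
    inv_anti₀ hpos (pow_le_pow_left₀ (by positivity) hd 3)
  have h32 : 32 * Sconst ≤ A^3 := by nlinarith
  have h8 : ((A/2)^3)⁻¹ = 8 / A^3 := by
    rw [div_pow]
    rw [inv_div]
    norm_num
  have hA3pos : (0:ℝ) < A^3 := by positivity
  have h2 : 2 * ((A/Real.sqrt 3)^3)⁻¹ * Sconst ≤ 1/2 := by
    have step1 : 2 * ((A/Real.sqrt 3)^3)⁻¹ * Sconst ≤ 2 * (8/A^3) * Sconst := by
      rw [← h8]
      nlinarith [hmono, hS]
    have step2 : 2 * (8/A^3) * Sconst ≤ 1/2 := by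
      rw [show 2 * (8/A^3) * Sconst = (16 * Sconst) / A^3 by ring,
        div_le_div_iff₀ hA3pos (by norm_num : (0:ℝ) < 2)]
      linarith
    linarith
  have hinvpos : (0:ℝ) ≤ ((A/Real.sqrt 3)^3)⁻¹ := by positivity
  calc ELJ {x : R2 | ∃ m n : ℤ, x = (m : ℝ) • (vec2 1 0) + (n : ℝ) • (vec2 0 A)}
      ≤ -2 + (A^2)⁻¹ * Sconst := hthin
  _ ≤ -2 + 1/44 := by linarith
  _ < -1/2 := by norm_num
  _ ≤ -2 * ((A/Real.sqrt 3)^3)⁻¹ * Sconst := by nlinarith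
  _ ≤ ELJ (triLattice A) := htri
end
end

section
/- Suppose L₀ is a global minimizer of the Lennard-Jones energy E_LJ among all Bravais lattices of ℝ², i.e. E_LJ(L₀) ≤ E_LJ(L) for every Bravais lattice L. Then ζ_{L₀}(12) = ζ_{L₀}(6), and E_LJ(L₀) = −ζ_{L₀}(6) = −ζ_{L₀}(12) < 0. -/
noncomputable section
open Real

def scaleEquiv (L : Set R2) (c : ℝ) (hc : 0 < c) :
    {y : R2 // y ∈ L ∧ y ≠ 0} ≃ {z : R2 // z ∈ (c • ·) '' L ∧ z ≠ 0} :=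
  { toFun := fun y => ⟨c • (y : R2), ⟨y, y.2.1, rfl⟩, by
      simp [smul_eq_zero, hc.ne', y.2.2]⟩
    invFun := fun z => ⟨c⁻¹ • (z : R2), by
      obtain ⟨w, hw, hwz⟩ := z.2.1
      simp only [← hwz, smul_smul, inv_mul_cancel₀ hc.ne', one_smul]
      exact hw, by simp [smul_eq_zero, hc.ne', z.2.2]⟩
    left_inv := fun y => by ext; simp [inv_mul_cancel_left₀ hc.ne']
    right_inv := fun z => by ext; simp [mul_inv_cancel_left₀ hc.ne'] }

lemma zetaL_smul (L : Set R2) (c s : ℝ) (hc : 0 < c) :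
    zetaL ((c • ·) '' L) s = c ^ (-s) * zetaL L s := by
  have h1 : ∑' y : {y : R2 // y ∈ L ∧ y ≠ 0}, ‖c • (y : R2)‖ ^ (-s) =
      zetaL ((c • ·) '' L) s := (scaleEquiv L c hc).tsum_eq (fun z => ‖(z : R2)‖ ^ (-s))
  rw [← h1, zetaL, ← tsum_mul_left]
  refine tsum_congr fun y => ?_
  rw [norm_smul, Real.norm_eq_abs, abs_of_pos hc,
    Real.mul_rpow hc.le (norm_nonneg _)]

lemma bravais_smul (L : Set R2) (c : ℝ) (hc : 0 < c) (h : IsBravais L) :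
    IsBravais ((c • ·) '' L) := by
  obtain ⟨u, v, hli, hset⟩ := h
  refine ⟨c • u, c • v, ?_, ?_⟩
  · have := hli.units_smul (fun _ => Units.mk0 c hc.ne')
    convert this using 1
    funext i
    fin_cases i <;> rfl
  · ext x
    simp only [Set.mem_image, hset, Set.mem_setOf_eq]
    constructor
    · rintro ⟨w, ⟨m, n, rfl⟩, rfl⟩
      exact ⟨m, n, by simp [smul_add, smul_comm c]⟩
    · rintro ⟨m, n, rfl⟩
      exact ⟨(m : ℝ) • u + (n : ℝ) • v, ⟨m, n, rfl⟩, by simp [smul_add, smul_comm c]⟩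

lemma norm_int_cast_vec (w : Fin 2 → ℤ) :
    ‖(fun i => (w i : ℝ) : Fin 2 → ℝ)‖ = ‖w‖ := by
  simp only [Pi.norm_def, Pi.nnnorm_def]
  congr 1

lemma summable_zetaL {L : Set R2} {u v : R2} (h : LatticeBasis L u v) {s : ℝ} (hs : 2 < s) :
    Summable fun x : {x : R2 // x ∈ L ∧ x ≠ 0} => ‖(x : R2)‖ ^ (-s) := by
  obtain ⟨hli, hset⟩ := h
  have hcard : Fintype.card (Fin 2) = Module.finrank ℝ R2 := by
    simp [finrank_euclideanSpace]
  set b : Module.Basis (Fin 2) ℝ R2 := basisOfLinearIndependentOfCardEqFinrank hli hcard with hb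
  have hb0 : b 0 = u := by simp [hb, coe_basisOfLinearIndependentOfCardEqFinrank]
  have hb1 : b 1 = v := by simp [hb, coe_basisOfLinearIndependentOfCardEqFinrank]
  have hψ : ∀ a : Fin 2 → ℝ, b.equivFun.symm a = a 0 • u + a 1 • v := by
    intro a
    rw [Module.Basis.equivFun_symm_apply, Fin.sum_univ_two, hb0, hb1]
  obtain ⟨C, hC, hCb⟩ :=
    (LinearMap.toContinuousLinearMap (b.equivFun : R2 →ₗ[ℝ] (Fin 2 → ℝ))).bound
  -- the equiv
  have hinj : ∀ w : Fin 2 → ℤ, (w 0 : ℝ) • u + (w 1 : ℝ) • v = 0 → w = 0 := by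
    intro w hw
    have : b.equivFun.symm (fun i => (w i : ℝ)) = 0 := by rw [hψ]; exact hw
    have h2 : (fun i => (w i : ℝ)) = (0 : Fin 2 → ℝ) := by
      apply b.equivFun.symm.injective
      rw [this, map_zero]
    funext i
    have h3 : ((w i : ℝ)) = 0 := by simpa using congrFun h2 i
    exact_mod_cast h3
  set F : {w : Fin 2 → ℤ // w ≠ 0} → {x : R2 // x ∈ L ∧ x ≠ 0} :=
    fun w => ⟨(w.1 0 : ℝ) • u + (w.1 1 : ℝ) • v,
      by rw [hset]; exact ⟨w.1 0, w.1 1, rfl⟩,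
      fun h => w.2 (hinj w.1 h)⟩ with hF
  have hFbij : Function.Bijective F := by
    constructor
    · intro w w' hww
      have : (w.1 0 : ℝ) • u + (w.1 1 : ℝ) • v = (w'.1 0 : ℝ) • u + (w'.1 1 : ℝ) • v := by
        simpa [hF] using congrArg Subtype.val hww
      have hsub : ((w.1 - w'.1) 0 : ℝ) • u + ((w.1 - w'.1) 1 : ℝ) • v = 0 := by
        simp only [Pi.sub_apply, Int.cast_sub]
        linear_combination (norm := module) this
      have := hinj _ hsub
      exact Subtype.ext (by rwa [sub_eq_zero] at this)
    · rintro ⟨x, hxL, hx0⟩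
      rw [hset] at hxL
      obtain ⟨m, n, rfl⟩ := hxL
      refine ⟨⟨![m, n], fun h => hx0 ?_⟩, ?_⟩
      · have h0 := congrFun h 0
        have h1 := congrFun h 1
        simp at h0 h1
        simp [h0, h1]
      · apply Subtype.ext
        simp [hF]
  set e := Equiv.ofBijective F hFbij with he
  rw [← e.summable_iff]
  have key : ∀ w : {w : Fin 2 → ℤ // w ≠ 0},
      ‖((e w : R2))‖ ^ (-s) ≤ C ^ s * ‖w.1‖ ^ (-s) := by
    intro w
    have hwn : (0:ℝ) < ‖w.1‖ := by
      rw [norm_pos_iff]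
      exact w.2
    have hx : (e w : R2) = b.equivFun.symm (fun i => (w.1 i : ℝ)) := by
      rw [hψ]; rfl
    have hlow : ‖w.1‖ / C ≤ ‖(e w : R2)‖ := by
      rw [div_le_iff₀ hC, mul_comm]
      calc ‖w.1‖ = ‖(fun i => (w.1 i : ℝ) : Fin 2 → ℝ)‖ := (norm_int_cast_vec _).symm
        _ = ‖b.equivFun ((e w : R2))‖ := by rw [hx, LinearEquiv.apply_symm_apply]
        _ ≤ C * ‖(e w : R2)‖ := hCb _
    have h1 : ‖(e w : R2)‖ ^ (-s) ≤ (‖w.1‖ / C) ^ (-s) :=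
      Real.rpow_le_rpow_of_nonpos (div_pos hwn hC) hlow (by linarith)
    refine h1.trans_eq ?_
    rw [Real.div_rpow (norm_nonneg _) hC.le, Real.rpow_neg hC.le, div_eq_mul_inv, inv_inv, mul_comm]
  have hsum : Summable fun w : {w : Fin 2 → ℤ // w ≠ 0} => C ^ s * ‖w.1‖ ^ (-s) := by
    apply Summable.mul_left
    exact (EisensteinSeries.summable_one_div_norm_rpow hs).subtype _
  exact hsum.of_nonneg_of_le (fun w => Real.rpow_nonneg (norm_nonneg _) _) key

/-- If `L₀` is a global minimizer of `E_LJ(L) = ζ_L(12) − 2ζ_L(6)` among Bravais lattices,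
then `ζ_{L₀}(12) = ζ_{L₀}(6)` and `E_LJ(L₀) = −ζ_{L₀}(6) = −ζ_{L₀}(12) < 0`. -/
theorem global_minimizer_zeta_eq (L₀ : Set R2) (h₀ : IsBravais L₀)
    (hmin : ∀ L : Set R2, IsBravais L →
      zetaL L₀ 12 - 2 * zetaL L₀ 6 ≤ zetaL L 12 - 2 * zetaL L 6) :
    zetaL L₀ 12 = zetaL L₀ 6 ∧
    zetaL L₀ 12 - 2 * zetaL L₀ 6 = -zetaL L₀ 6 ∧
    zetaL L₀ 12 - 2 * zetaL L₀ 6 = -zetaL L₀ 12 ∧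
    zetaL L₀ 12 - 2 * zetaL L₀ 6 < 0 := by
  obtain ⟨u, v, hLB⟩ := h₀
  set a := zetaL L₀ 12 with hadef
  set b := zetaL L₀ 6 with hbdef
  have hsum6 : Summable fun x : {x : R2 // x ∈ L₀ ∧ x ≠ 0} => ‖(x : R2)‖ ^ (-(6:ℝ)) :=
    summable_zetaL hLB (by norm_num)
  have ha0 : 0 ≤ a := tsum_nonneg fun x => Real.rpow_nonneg (norm_nonneg _) _
  have hb0 : 0 ≤ b := tsum_nonneg fun x => Real.rpow_nonneg (norm_nonneg _) _
  have hu0 : u ≠ 0 := by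
    have := hLB.1.ne_zero 0
    simpa using this
  have huL : u ∈ L₀ := by
    rw [hLB.2]; exact ⟨1, 0, by simp⟩
  have hbpos : 0 < b := by
    have hterm : (0:ℝ) < ‖u‖ ^ (-(6:ℝ)) :=
      Real.rpow_pos_of_pos (norm_pos_iff.2 hu0) _
    have hle : ‖u‖ ^ (-(6:ℝ)) ≤ b :=
      hsum6.le_tsum ⟨u, huL, hu0⟩ (fun j _ => Real.rpow_nonneg (norm_nonneg _) _)
    linarith
  have hQ : ∀ t : ℝ, 0 < t → a - 2*b ≤ a*t^2 - 2*(b*t) := by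
    intro t ht
    set c := t ^ (-(6:ℝ)⁻¹) with hcdef
    have hc : 0 < c := Real.rpow_pos_of_pos ht _
    have h1 := hmin ((c • ·) '' L₀) (bravais_smul _ c hc ⟨u, v, hLB⟩)
    rw [zetaL_smul _ _ _ hc, zetaL_smul _ _ _ hc] at h1
    have hc12 : c ^ (-(12:ℝ)) = t ^ 2 := by
      rw [hcdef, ← Real.rpow_mul ht.le, show (-(6:ℝ)⁻¹ * -12) = ((2:ℕ):ℝ) by norm_num,
        Real.rpow_natCast]
    have hc6 : c ^ (-(6:ℝ)) = t := by
      rw [hcdef, ← Real.rpow_mul ht.le]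
      norm_num
    rw [hc12, hc6] at h1
    linarith
  have hab : a = b := by
    by_contra hne
    rcases lt_or_gt_of_ne hne with hlt | hgt
    · set ε := (b - a)/(a+1) with hε
      have hεpos : 0 < ε := div_pos (by linarith) (by linarith)
      have haε : a * ε ≤ b - a := by
        rw [hε, mul_div_assoc']
        rw [div_le_iff₀ (by linarith : (0:ℝ) < a + 1)]
        nlinarith
      have h2 := hQ (1+ε) (by linarith)
      nlinarith [mul_le_mul_of_nonneg_left haε hεpos.le, mul_pos hεpos hεpos]
    · set ε := (a - b)/(a+1) with hε
      have hεpos : 0 < ε := div_pos (by linarith) (by linarith)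
      have hεlt1 : ε < 1 := by
        rw [hε, div_lt_one (by linarith : (0:ℝ) < a + 1)]
        linarith
      have haε : a * ε ≤ a - b := by
        rw [hε, mul_div_assoc']
        rw [div_le_iff₀ (by linarith : (0:ℝ) < a + 1)]
        nlinarith
      have h2 := hQ (1-ε) (by linarith)
      nlinarith [mul_le_mul_of_nonneg_left haε hεpos.le, mul_pos hεpos hεpos]
  exact ⟨hab, by linarith, by linarith, by linarith⟩
end
end

section
/- The triangular lattice with nearest-neighbour distance 1 (i.e. Λ_A with A = √3/2, generated by (1,0) and (1/2, √3/2)) is not a global minimizer of the Lennard-Jones energy among Bravais lattices of ℝ²: there exists a Bravais lattice L of ℝ² with E_LJ(L) < E_LJ(Λ_{√3/2}), even though the minimum of the potential V_LJ is achieved at r = 1. -/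
noncomputable section
open Real

/-! ### Auxiliary material -/

namespace LJAux

def uu : R2 := vec2 1 0
def vv : R2 := vec2 (1/2) (Real.sqrt 3 / 2)

lemma app0 (m n : ℝ) : (m • uu + n • vv) 0 = m + n * (1/2) := by
  simp [uu, vv, vec2, WithLp.equiv, Equiv.refl]

lemma app1 (m n : ℝ) : (m • uu + n • vv) 1 = n * (Real.sqrt 3 / 2) := by
  simp [uu, vv, vec2, WithLp.equiv, Equiv.refl]

def Q (p : ℤ × ℤ) : ℝ := ((p.1^2 + p.1*p.2 + p.2^2 : ℤ) : ℝ)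

lemma Q_one_le {p : ℤ × ℤ} (hp : p ≠ 0) : 1 ≤ Q p := by
  obtain ⟨m, n⟩ := p
  have h : m ≠ 0 ∨ n ≠ 0 := by
    by_contra h; push_neg at h; exact hp (by simp [Prod.ext_iff, h.1, h.2])
  have : 1 ≤ m^2 + m*n + n^2 := by
    rcases h with h | h
    · rcases h.lt_or_gt with h' | h' <;> nlinarith [sq_nonneg (m+n), sq_nonneg n]
    · rcases h.lt_or_gt with h' | h' <;> nlinarith [sq_nonneg (m+n), sq_nonneg m]
  unfold Q; exact_mod_cast this

lemma Q_ge (p : ℤ × ℤ) : ((p.1:ℝ)^2 + (p.2:ℝ)^2) / 2 ≤ Q p := by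
  unfold Q; push_cast; nlinarith [sq_nonneg ((p.1:ℝ) + p.2)]

lemma Q_pos {p : ℤ × ℤ} (hp : p ≠ 0) : 0 < Q p := lt_of_lt_of_le one_pos (Q_one_le hp)

lemma norm_mn (m n : ℤ) : ‖(m:ℝ) • uu + (n:ℝ) • vv‖ = Real.sqrt (Q (m, n)) := by
  rw [EuclideanSpace.norm_eq]
  congr 1
  rw [Fin.sum_univ_two, app0, app1]
  have h3 : Real.sqrt 3 ^ 2 = 3 := Real.sq_sqrt (by norm_num)
  simp only [Real.norm_eq_abs, sq_abs, Q]
  push_cast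
  nlinarith [h3]

lemma pair_eq {s t : ℝ} (h : s • uu + t • vv = 0) : s = 0 ∧ t = 0 := by
  have h1 : (s • uu + t • vv) 1 = (0:R2) 1 := by rw [h]
  have h0 : (s • uu + t • vv) 0 = (0:R2) 0 := by rw [h]
  rw [app1] at h1; rw [app0] at h0
  have z1 : (0:R2) 1 = 0 := rfl
  have z0 : (0:R2) 0 = 0 := rfl
  rw [z1] at h1; rw [z0] at h0
  have h3 : Real.sqrt 3 / 2 ≠ 0 := by positivity
  have ht : t = 0 := by
    rcases mul_eq_zero.1 h1 with h' | h'; exact h'; exact absurd h' h3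
  refine ⟨?_, ht⟩
  rw [ht] at h0; linarith

lemma inj_mn : Function.Injective (fun p : ℤ × ℤ => (p.1:ℝ) • uu + (p.2:ℝ) • vv) := by
  rintro ⟨m, n⟩ ⟨m', n'⟩ h
  simp only at h
  have h2 : ((m:ℝ) - m') • uu + ((n:ℝ) - n') • vv = 0 := by
    rw [sub_smul, sub_smul, sub_add_sub_comm, h, sub_self]
  obtain ⟨hs, ht⟩ := pair_eq h2
  have hm : (m:ℝ) = m' := by linarith
  have hn : (n:ℝ) = n' := by linarith
  exact Prod.ext (by exact_mod_cast hm) (by exact_mod_cast hn)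

lemma linind (c : ℝ) (hc : c ≠ 0) : LinearIndependent ℝ ![c • uu, c • vv] := by
  rw [LinearIndependent.pair_iff]
  intro s t hst
  rw [smul_smul, smul_smul] at hst
  obtain ⟨hs, ht⟩ := pair_eq hst
  exact ⟨by rcases mul_eq_zero.1 hs with h|h; exact h; exact absurd h hc,
         by rcases mul_eq_zero.1 ht with h|h; exact h; exact absurd h hc⟩

/-- The triangular lattice scaled by `c`. -/
def Lc (c : ℝ) : Set R2 :=
  {x : R2 | ∃ m n : ℤ, x = (m : ℝ) • (c • uu) + (n : ℝ) • (c • vv)}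

lemma comb (c : ℝ) (m n : ℤ) :
    (m:ℝ) • (c • uu) + (n:ℝ) • (c • vv) = c • ((m:ℝ) • uu + (n:ℝ) • vv) := by
  rw [smul_comm (m:ℝ) c, smul_comm (n:ℝ) c, smul_add]

lemma norm_c {c : ℝ} (hc : 0 < c) (m n : ℤ) :
    ‖c • ((m:ℝ) • uu + (n:ℝ) • vv)‖ = c * Real.sqrt (Q (m, n)) := by
  rw [norm_smul, norm_mn, Real.norm_eq_abs, abs_of_pos hc]

lemma bravais {c : ℝ} (hc : c ≠ 0) : IsBravais (Lc c) :=
  ⟨c • uu, c • vv, linind c hc, rfl⟩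

/-- Summability lemmas -/
lemma sum_int_inv : Summable (fun m : ℤ => 1 / (1 + (m:ℝ)^2)) := by
  have base : Summable (fun m : ℤ => 1 / (m:ℝ)^2) := summable_one_div_int_pow.2 one_lt_two
  apply Summable.of_norm_bounded_eventually (g := fun m : ℤ => 1 / (m:ℝ)^2) base
  have : ({0}ᶜ : Set ℤ) ∈ Filter.cofinite := (Set.finite_singleton 0).compl_mem_cofinite
  filter_upwards [this] with m hm
  have hm0 : (m:ℝ)^2 ≠ 0 := by
    simp only [Set.mem_compl_iff, Set.mem_singleton_iff] at hm
    positivity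
  rw [Real.norm_eq_abs, abs_of_nonneg (by positivity)]
  apply div_le_div_of_nonneg_left one_pos.le (by positivity)
  linarith [sq_nonneg (m:ℝ)]

lemma sum_prod : Summable (fun p : ℤ × ℤ => 1 / ((1 + (p.1:ℝ)^2) * (1 + (p.2:ℝ)^2))) := by
  have := Summable.mul_of_nonneg sum_int_inv sum_int_inv
    (fun m => by positivity) (fun m => by positivity)
  apply this.congr
  intro p
  rw [div_mul_div_comm, one_mul]

lemma sum_Q3 : Summable (fun p : {p : ℤ × ℤ // p ≠ 0} => Q p.1 ^ (-3:ℤ)) := by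
  have hb : Summable (fun p : {p : ℤ × ℤ // p ≠ 0} =>
      32 / ((1 + ((p:ℤ×ℤ).1:ℝ)^2) * (1 + ((p:ℤ×ℤ).2:ℝ)^2))) := by
    have := (sum_prod.mul_left (32:ℝ)).subtype {p : ℤ × ℤ | p ≠ 0}
    apply this.congr
    intro p
    simp only [Function.comp_apply, mul_one_div]
  apply Summable.of_nonneg_of_le _ _ hb
  · intro p
    have h1 : (1:ℝ) ≤ Q p.1 := Q_one_le p.2
    positivity
  · rintro ⟨⟨m, n⟩, hp⟩
    show Q (m, n) ^ (-3:ℤ) ≤ 32 / ((1 + (m:ℝ)^2) * (1 + (n:ℝ)^2))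
    have h1 : (1:ℝ) ≤ Q (m, n) := Q_one_le hp
    have hs : (1:ℝ) ≤ (m:ℝ)^2 + (n:ℝ)^2 := by
      have h : m ≠ 0 ∨ n ≠ 0 := by
        by_contra h; push_neg at h; exact hp (by simp [Prod.ext_iff, h.1, h.2])
      have : (1:ℤ) ≤ m^2 + n^2 := by
        rcases h with h | h
        · rcases h.lt_or_gt with h' | h' <;> nlinarith
        · rcases h.lt_or_gt with h' | h' <;> nlinarith
      exact_mod_cast this
    have hQ := Q_ge (m, n)
    simp only at hQ
    rw [zpow_neg, zpow_ofNat, inv_eq_one_div,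
      div_le_div_iff₀ (by positivity) (by positivity)]
    calc 1 * ((1 + (m:ℝ)^2) * (1 + (n:ℝ)^2))
        ≤ 32 * (((m:ℝ)^2 + (n:ℝ)^2)/2)^3 := by
          nlinarith [sq_nonneg ((m:ℝ)^2 - (n:ℝ)^2), sq_nonneg ((m:ℝ)*n), sq_nonneg ((m:ℝ)^2+(n:ℝ)^2)]
      _ ≤ 32 * Q (m,n)^3 := by
          have h0 : (0:ℝ) ≤ ((m:ℝ)^2 + (n:ℝ)^2)/2 := by positivity
          gcongr

lemma Q63 (p : {p : ℤ × ℤ // p ≠ 0}) : Q p.1 ^ (-6:ℤ) ≤ Q p.1 ^ (-3:ℤ) :=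
  zpow_le_zpow_right₀ (Q_one_le p.2) (by norm_num)

lemma sum_Q6 : Summable (fun p : {p : ℤ × ℤ // p ≠ 0} => Q p.1 ^ (-6:ℤ)) := by
  apply Summable.of_nonneg_of_le _ Q63 sum_Q3
  intro p
  have h1 : (0:ℝ) < Q p.1 := Q_pos p.2
  positivity

/-- The two lattice sums. -/
def a : ℝ := ∑' p : {p : ℤ × ℤ // p ≠ 0}, Q p.1 ^ (-6:ℤ)
def b : ℝ := ∑' p : {p : ℤ × ℤ // p ≠ 0}, Q p.1 ^ (-3:ℤ)

lemma ha : 0 < a := by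
  have h10 : ((1, 0) : ℤ × ℤ) ≠ 0 := by simp
  refine Summable.tsum_pos sum_Q6 (fun p => ?_) ⟨(1,0), h10⟩ ?_
  · have h1 : (0:ℝ) < Q p.1 := Q_pos p.2
    positivity
  · have : Q (1, 0) = 1 := by norm_num [Q]
    simp [this]

lemma hb : 0 < b := by
  have h10 : ((1, 0) : ℤ × ℤ) ≠ 0 := by simp
  refine Summable.tsum_pos sum_Q3 (fun p => ?_) ⟨(1,0), h10⟩ ?_
  · have h1 : (0:ℝ) < Q p.1 := Q_pos p.2
    positivity
  · have : Q (1, 0) = 1 := by norm_num [Q]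
    simp [this]

lemma hab : a < b := by
  have h11 : ((1, 1) : ℤ × ℤ) ≠ 0 := by simp
  refine Summable.tsum_lt_tsum Q63 (i := ⟨(1,1), h11⟩) ?_ sum_Q6 sum_Q3
  have : Q (1, 1) = 3 := by norm_num [Q]
  rw [this]
  norm_num

/-- The lattice equiv. -/
def eqv {c : ℝ} (hc : 0 < c) :
    {p : ℤ × ℤ // p ≠ 0} ≃ {x : R2 // x ∈ Lc c ∧ x ≠ 0} := by
  refine Equiv.ofBijective
    (fun p => ⟨c • ((p.1.1:ℝ) • uu + (p.1.2:ℝ) • vv),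
      ⟨p.1.1, p.1.2, (comb c p.1.1 p.1.2).symm⟩, ?_⟩) ⟨?_, ?_⟩
  · intro h0
    have hn : ‖c • ((p.1.1:ℝ) • uu + (p.1.2:ℝ) • vv)‖ = c * Real.sqrt (Q (p.1.1, p.1.2)) :=
      norm_c hc _ _
    rw [h0, norm_zero] at hn
    have hq : (0:ℝ) < Q (p.1.1, p.1.2) := Q_pos p.2
    have : 0 < c * Real.sqrt (Q (p.1.1, p.1.2)) := by positivity
    linarith [hn ▸ this]
  · intro p p' h
    have h1 := congrArg Subtype.val h
    simp only at h1
    have h2 := smul_right_injective R2 (ne_of_gt hc) h1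
    exact Subtype.ext (inj_mn h2)
  · rintro ⟨x, ⟨m, n, hx⟩, hne⟩
    have hmn : ((m, n) : ℤ × ℤ) ≠ 0 := by
      rintro h0
      apply hne
      have hm : m = 0 := by simpa using congrArg Prod.fst h0
      have hn : n = 0 := by simpa using congrArg Prod.snd h0
      rw [hx, hm, hn]; simp
    refine ⟨⟨(m, n), hmn⟩, Subtype.ext ?_⟩
    show c • ((m:ℝ) • uu + (n:ℝ) • vv) = x
    rw [← comb]; exact hx.symm

lemma ELJ_Lc {c : ℝ} (hc : 0 < c) :
    ELJ (Lc c) = c ^ (-12:ℤ) * a - 2 * c ^ (-6:ℤ) * b := by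
  have key : ∀ p : {p : ℤ × ℤ // p ≠ 0},
      VLJ (c * Real.sqrt (Q p.1)) =
        c ^ (-12:ℤ) * Q p.1 ^ (-6:ℤ) - 2 * c ^ (-6:ℤ) * Q p.1 ^ (-3:ℤ) := by
    intro p
    have hq : (0:ℝ) < Q p.1 := Q_pos p.2
    have hsq : (Real.sqrt (Q p.1)) ^ (2:ℤ) = Q p.1 := by
      rw [zpow_two]; exact Real.mul_self_sqrt hq.le
    have hs12 : Real.sqrt (Q p.1) ^ (-12:ℤ) = Q p.1 ^ (-6:ℤ) := by
      rw [show (-12:ℤ) = 2 * (-6) by norm_num, zpow_mul, hsq]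
    have hs6 : Real.sqrt (Q p.1) ^ (-6:ℤ) = Q p.1 ^ (-3:ℤ) := by
      rw [show (-6:ℤ) = 2 * (-3) by norm_num, zpow_mul, hsq]
    rw [VLJ, mul_zpow, mul_zpow, hs12, hs6]
    ring
  have heq : ELJ (Lc c) = ∑' p : {p : ℤ × ℤ // p ≠ 0}, VLJ (c * Real.sqrt (Q p.1)) := by
    rw [ELJ, ← Equiv.tsum_eq (eqv hc)]
    apply tsum_congr
    intro p
    congr 1
    exact norm_c hc p.1.1 p.1.2
  rw [heq]
  have h1 : Summable (fun p : {p : ℤ × ℤ // p ≠ 0} => c ^ (-12:ℤ) * Q p.1 ^ (-6:ℤ)) :=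
    sum_Q6.mul_left _
  have h2 : Summable (fun p : {p : ℤ × ℤ // p ≠ 0} => 2 * c ^ (-6:ℤ) * Q p.1 ^ (-3:ℤ)) :=
    sum_Q3.mul_left _
  calc ∑' p : {p : ℤ × ℤ // p ≠ 0}, VLJ (c * Real.sqrt (Q p.1))
      = ∑' p : {p : ℤ × ℤ // p ≠ 0},
          (c ^ (-12:ℤ) * Q p.1 ^ (-6:ℤ) - 2 * c ^ (-6:ℤ) * Q p.1 ^ (-3:ℤ)) :=
        tsum_congr key
    _ = (∑' p : {p : ℤ × ℤ // p ≠ 0}, c ^ (-12:ℤ) * Q p.1 ^ (-6:ℤ)) -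
        (∑' p : {p : ℤ × ℤ // p ≠ 0}, 2 * c ^ (-6:ℤ) * Q p.1 ^ (-3:ℤ)) := Summable.tsum_sub h1 h2
    _ = c ^ (-12:ℤ) * a - 2 * c ^ (-6:ℤ) * b := by
        rw [tsum_mul_left, tsum_mul_left, a, b]

lemma tri_eq : triLattice (Real.sqrt 3 / 2) = Lc 1 := by
  have h3 : Real.sqrt 3 ≠ 0 := by positivity
  have h1 : 2 * (Real.sqrt 3 / 2) / Real.sqrt 3 = 1 := by field_simp
  rw [triLattice, Lc]
  rw [h1, Real.sqrt_one]
  rfl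

end LJAux

open LJAux in
/-- The triangular lattice of nearest-neighbour distance `1` (area `√3/2`) is not a global
minimizer of the Lennard-Jones energy among Bravais lattices. -/
theorem triangular_length_one_not_global_minimizer :
    ∃ L : Set R2, IsBravais L ∧ ELJ L < ELJ (triLattice (Real.sqrt 3 / 2)) := by
  have hA := ha
  have hB := hb
  have hAB := hab
  set c₀ : ℝ := (a / b) ^ ((1:ℝ)/6) with hc₀def
  have hab' : 0 < a / b := div_pos hA hB
  have hc₀ : 0 < c₀ := Real.rpow_pos_of_pos hab' _
  have h6 : c₀ ^ (-6:ℤ) = b / a := by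
    rw [← Real.rpow_intCast c₀ (-6), hc₀def, ← Real.rpow_mul hab'.le]
    norm_num
    rw [Real.rpow_neg_one, inv_div]
  have h12 : c₀ ^ (-12:ℤ) = (b / a) ^ 2 := by
    rw [show (-12:ℤ) = -6 * 2 by norm_num, zpow_mul, h6]
    norm_cast
  refine ⟨Lc c₀, bravais (ne_of_gt hc₀), ?_⟩
  rw [tri_eq, ELJ_Lc hc₀, ELJ_Lc one_pos, h6, h12]
  simp only [one_zpow]
  have hkey : 0 < (b - a)^2 := pow_pos (sub_pos.2 hAB) 2
  have hne : a ≠ 0 := ne_of_gt hA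
  have lhs_eq : (b/a)^2 * a - 2 * (b/a) * b = -(b^2/a) := by
    field_simp
    ring
  rw [lhs_eq]
  have h2 : 2*b - a < b^2/a := by
    rw [lt_div_iff₀ hA]
    nlinarith [hkey]
  linarith
end
end
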